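/- arXiv:1904.11708 — 15 statements merged into one kernel-verified Lean document; each statement's English description precedes it below -/
import Mathlib

section
/- Let k be a field, S = k[t], and R a core of S. Then the contraction map Spec S → Spec R, Q ↦ Q ∩ R, is a bijection. -/
/-!
`k[t]` is integral over `R`, since `t` is a root of `T ^ (c₀ + 1) - t ^ (c₀ + 1) ∈ R[T]`; lying over
gives surjectivity. After inverting `t ^ c₀` the rings `R` and `k[t]` coincide, so a prime of
`k[t]` not containing `t` is recovered from its contraction, as `s ∈ Q ↔ t ^ c₀ * s ∈ Q ∩ R`. The
only prime containing `t ^ c₀` is `(t)`, and whether `t ^ c₀ ∈ Q` is read off from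
`t ^ (2 * c₀) ∈ Q ∩ R`.
-/

open Polynomial

namespace PrimeSpectrum

variable {R A : Type*} [CommRing R] [CommRing A] [Algebra R A]

theorem mem_basicOpen_iff_comap_mem_basicOpen {f : A} {r : R} (hr : algebraMap R A r = f * f)
    (Q : PrimeSpectrum A) : Q ∈ basicOpen f ↔ comap (algebraMap R A) Q ∈ basicOpen r := by
  rw [mem_basicOpen, mem_basicOpen, comap_asIdeal, Ideal.mem_comap, hr,
    Q.2.mul_mem_iff_mem_or_mem, or_self]

theorem comap_injOn_basicOpen_of_mul_mem_range {f : A}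
    (hf : ∀ s : A, f * s ∈ (algebraMap R A).range) :
    Set.InjOn (comap (algebraMap R A)) (basicOpen f) := by
  intro Q₁ hQ₁ Q₂ hQ₂ h
  ext s
  obtain ⟨r, hr⟩ := hf s
  have key : ∀ Q ∈ basicOpen f, s ∈ Q.asIdeal ↔ r ∈ (comap (algebraMap R A) Q).asIdeal :=
    fun Q hQ => by rw [comap_asIdeal, Ideal.mem_comap, hr, Ideal.IsPrime.mul_mem_left_iff hQ]
  rw [key Q₁ hQ₁, key Q₂ hQ₂, h]

theorem comap_injective_of_mul_mem_range {f : A}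
    (hf : ∀ s : A, f * s ∈ (algebraMap R A).range) (hZ : (zeroLocus {f}).Subsingleton) :
    Function.Injective (comap (algebraMap R A)) := by
  intro Q₁ Q₂ h
  obtain ⟨r, hr⟩ := hf f
  have hiff : Q₁ ∈ basicOpen f ↔ Q₂ ∈ basicOpen f := by
    rw [mem_basicOpen_iff_comap_mem_basicOpen hr, mem_basicOpen_iff_comap_mem_basicOpen hr Q₂, h]
  by_cases hQ₁ : Q₁ ∈ basicOpen f
  · exact comap_injOn_basicOpen_of_mul_mem_range hf hQ₁ (hiff.mp hQ₁) h
  · have hQ₂ : Q₂ ∉ basicOpen f := hiff.not.mp hQ₁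
    exact hZ (by simpa [mem_basicOpen] using hQ₁) (by simpa [mem_basicOpen] using hQ₂)

theorem zeroLocus_singleton_pow_subsingleton [IsPrincipalIdealRing A] {p : A}
    (hp : Irreducible p) (n : ℕ) : (zeroLocus {p ^ n}).Subsingleton := by
  have := PrincipalIdealRing.isMaximal_of_irreducible hp
  have hsub : zeroLocus {p ^ n} ⊆ zeroLocus (Ideal.span {p} : Set A) := by
    intro Q hQ
    rw [zeroLocus_span, mem_zeroLocus, Set.singleton_subset_iff] at *
    exact Q.2.mem_of_pow_mem n hQ
  rw [zeroLocus_eq_singleton] at hsub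
  exact Set.subsingleton_singleton.anti hsub

end PrimeSpectrum

theorem Algebra.IsIntegral.polynomial_of_X_pow_mem {k : Type*} [Field k]
    {R : Subalgebra k k[X]} {n : ℕ} (hn : 0 < n) (hX : X ^ n ∈ R) :
    Algebra.IsIntegral R k[X] := by
  have hXint : IsIntegral R (X : k[X]) :=
    IsIntegral.of_pow hn (isIntegral_algebraMap (x := (⟨X ^ n, hX⟩ : R)))
  have hle : Algebra.adjoin k {X} ≤ (integralClosure R k[X]).restrictScalars k :=
    Algebra.adjoin_le (Set.singleton_subset_iff.mpr hXint)
  rw [adjoin_X] at hle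
  exact ⟨fun p => hle Algebra.mem_top⟩

theorem core_comap_spec_bijective_general
    (k : Type*) [Field k] (R : Subalgebra k (Polynomial k))
    (c₀ : ℕ) (hR : ∀ s : Polynomial k, (X : Polynomial k) ^ c₀ * s ∈ R) :
    Function.Bijective
      (PrimeSpectrum.comap (algebraMap R (Polynomial k)) :
        PrimeSpectrum (Polynomial k) → PrimeSpectrum R) := by
  have : Algebra.IsIntegral R k[X] :=
    .polynomial_of_X_pow_mem c₀.succ_pos (by simpa [pow_succ] using hR X)
  exact ⟨PrimeSpectrum.comap_injective_of_mul_mem_range (fun s => ⟨⟨_, hR s⟩, rfl⟩)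
      (PrimeSpectrum.zeroLocus_singleton_pow_subsingleton irreducible_X c₀),
    Algebra.IsIntegral.comap_surjective R k[X]⟩

/-- if `R` is a core of `S = k[t]`, the contraction map
`Spec S → Spec R`, `Q ↦ Q ∩ R`, is bijective. -/
theorem core_comap_spec_bijective
    (k : Type*) [Field k] (R : Subalgebra k (Polynomial k))
    (c₀ : ℕ) (hc₀ : 0 < c₀) (hR : ∀ s : Polynomial k, (X : Polynomial k) ^ c₀ * s ∈ R) :
    Function.Bijective
      (PrimeSpectrum.comap (algebraMap R (Polynomial k)) :
        PrimeSpectrum (Polynomial k) → PrimeSpectrum R) :=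
  core_comap_spec_bijective_general k R c₀ hR
end

section
/- Let k be a field, S = k[t], R a core of S, Q a prime of S and P = Q ∩ R. Then the residue field of Q equals k (i.e., S/Q ≅ k) if and only if the residue field of P equals k (i.e., R/P ≅ k). -/
open Polynomial

set_option synthInstance.maxHeartbeats 1000000 in
/-- for a core `R` of `S = k[t]`, a prime `Q` of `S` and `P = Q ∩ R`,
`Q` is a `k`-rational point of `Spec S` (i.e. `S/Q ≅ k`) iff `P` is a `k`-rational
point of `Spec R` (i.e. `R/P ≅ k`). -/
theorem core_rational_point_iff
    (k : Type*) [Field k] (R : Subalgebra k (Polynomial k))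
    (c₀ : ℕ) (hc₀ : 0 < c₀) (hR : ∀ s : Polynomial k, (X : Polynomial k) ^ c₀ * s ∈ R)
    (Q : Ideal (Polynomial k)) (hQ : Q.IsPrime)
    (P : Ideal R) (hP : P = Q.comap (algebraMap R (Polynomial k))) :
    Function.Bijective (algebraMap k (Polynomial k ⧸ Q)) ↔
      Function.Bijective (algebraMap k (R ⧸ P)) := by
  subst hP
  set P := Q.comap (algebraMap R (Polynomial k)) with hPdef
  have hPprime : P.IsPrime := Ideal.IsPrime.comap _
  have key1 : ∀ a : k, algebraMap k (Polynomial k ⧸ Q) a = Ideal.Quotient.mk Q (C a) := by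
    intro a; rfl
  have key2 : ∀ a : k, algebraMap k (R ⧸ P) a = Ideal.Quotient.mk P (algebraMap k R a) := by
    intro a; rfl
  haveI : Nontrivial (Polynomial k ⧸ Q) := Ideal.Quotient.nontrivial_iff.mpr hQ.ne_top
  haveI : Nontrivial (R ⧸ P) := Ideal.Quotient.nontrivial_iff.mpr hPprime.ne_top
  have hinj1 : Function.Injective (algebraMap k (Polynomial k ⧸ Q)) :=
    (algebraMap k _).injective
  have hinj2 : Function.Injective (algebraMap k (R ⧸ P)) :=
    (algebraMap k _).injective
  constructor
  · rintro ⟨-, hsurj⟩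
    refine ⟨hinj2, fun x => ?_⟩
    obtain ⟨r, rfl⟩ := Ideal.Quotient.mk_surjective x
    obtain ⟨a, ha⟩ := hsurj (Ideal.Quotient.mk Q (r : Polynomial k))
    refine ⟨a, ?_⟩
    rw [key2, Ideal.Quotient.eq]
    show (((algebraMap k R a - r : R) : Polynomial k)) ∈ Q
    rw [key1, Ideal.Quotient.eq] at ha
    have : (((algebraMap k R a - r : R) : Polynomial k)) = C a - (r : Polynomial k) := by
      push_cast
      simp [Polynomial.algebraMap_eq]
    rw [this]
    exact ha
  · rintro ⟨-, hsurj⟩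
    refine ⟨hinj1, ?_⟩
    -- get a, b
    obtain ⟨a, ha⟩ := hsurj (Ideal.Quotient.mk P ⟨X ^ c₀ * 1, hR 1⟩)
    obtain ⟨b, hb⟩ := hsurj (Ideal.Quotient.mk P ⟨X ^ c₀ * X, hR X⟩)
    rw [key2, Ideal.Quotient.eq] at ha hb
    have ha' : (X : Polynomial k) ^ c₀ - C a ∈ Q := by
      have := Q.neg_mem ha
      have heq : -(algebraMap R (Polynomial k)) ((algebraMap k R a - ⟨X ^ c₀ * 1, hR 1⟩ : R)) =
          (X : Polynomial k) ^ c₀ - C a := by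
        rw [map_sub, neg_sub, ← IsScalarTower.algebraMap_apply k R (Polynomial k),
          Polynomial.algebraMap_eq, Subalgebra.algebraMap_eq]
        show (X ^ c₀ * 1 : Polynomial k) - C a = X ^ c₀ - C a
        ring
      rwa [heq] at this
    have hb' : (X : Polynomial k) ^ c₀ * X - C b ∈ Q := by
      have := Q.neg_mem hb
      have heq : -(algebraMap R (Polynomial k)) ((algebraMap k R b - ⟨X ^ c₀ * X, hR X⟩ : R)) =
          (X : Polynomial k) ^ c₀ * X - C b := by
        rw [map_sub, neg_sub, ← IsScalarTower.algebraMap_apply k R (Polynomial k),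
          Polynomial.algebraMap_eq, Subalgebra.algebraMap_eq]
        rfl
      rwa [heq] at this
    -- claim: there is c with X - C c ∈ Q
    have hc : ∃ c : k, (X : Polynomial k) - C c ∈ Q := by
      by_cases h0 : a = 0
      · refine ⟨0, ?_⟩
        have hXpow : (X : Polynomial k) ^ c₀ ∈ Q := by
          have := ha'
          rw [h0, map_zero, sub_zero] at this
          exact this
        have hX : (X : Polynomial k) ∈ Q := hQ.mem_of_pow_mem _ hXpow
        simpa using hX
      · refine ⟨a⁻¹ * b, ?_⟩
        have hmem : C a * ((X : Polynomial k) - C (a⁻¹ * b)) ∈ Q := by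
          have heq : C a * ((X : Polynomial k) - C (a⁻¹ * b)) =
              -((X : Polynomial k) * ((X : Polynomial k) ^ c₀ - C a)) +
                ((X : Polynomial k) ^ c₀ * X - C b) := by
            rw [mul_sub, ← C_mul, mul_inv_cancel_left₀ h0]
            ring
          rw [heq]
          exact Q.add_mem (Q.neg_mem (Q.mul_mem_left _ ha')) hb'
        rcases hQ.mem_or_mem hmem with h | h
        · exfalso
          have : (1 : Polynomial k) ∈ Q := by
            have := Q.mul_mem_left (C a⁻¹) h
            rwa [← map_mul, inv_mul_cancel₀ h0, map_one] at this
          exact hQ.ne_top (Q.eq_top_iff_one.mpr this)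
        · exact h
    obtain ⟨c, hc⟩ := hc
    intro x
    obtain ⟨p, rfl⟩ := Ideal.Quotient.mk_surjective x
    refine ⟨p.eval c, ?_⟩
    rw [key1, Ideal.Quotient.eq]
    obtain ⟨q, hq⟩ := Polynomial.X_sub_C_dvd_sub_C_eval (a := c) (p := p)
    have : C (p.eval c) - p = -((X - C c) * q) := by rw [← hq]; ring
    rw [this]
    exact Q.neg_mem (Q.mul_mem_right _ hc)
end

section
/- Let k be a field, S = k[t], R a core of S with t^{c₀}S ⊆ R, and f ∈ S with f(0) = 1. Let ℓ ≥ max(2, c₀) and let g ∈ S be the unique polynomial of degree < ℓ with f·g ≡ 1 mod t^ℓ S. Then f ∈ R if and only if g ∈ R. -/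
open Polynomial

/-- for a core `R` of `S = k[t]` with `t^{c₀}S ⊆ R`, `f ∈ S` with
`f(0) = 1`, `ℓ ≥ max(2, c₀)` and `g` the unique polynomial of degree `< ℓ` with
`f·g ≡ 1 mod t^ℓ S`, one has `f ∈ R` iff `g ∈ R`. -/
theorem mem_core_iff_inverse_mem
    (k : Type*) [Field k] (R : Subalgebra k (Polynomial k))
    (c₀ : ℕ) (hc₀ : 0 < c₀) (hR : ∀ s : Polynomial k, (X : Polynomial k) ^ c₀ * s ∈ R)
    (f : Polynomial k) (hf : f.eval 0 = 1)
    (ℓ : ℕ) (hℓ2 : 2 ≤ ℓ) (hℓc : c₀ ≤ ℓ)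
    (g : Polynomial k) (hgdeg : g.degree < (ℓ : ℕ))
    (hg : f * g - 1 ∈ Ideal.span {(X : Polynomial k) ^ ℓ}) :
    f ∈ R ↔ g ∈ R := by
  have hdvd : (X : Polynomial k) ^ ℓ ∣ f * g - 1 := Ideal.mem_span_singleton.mp hg
  -- any multiple of X^ℓ lies in R
  have hXR : ∀ a : Polynomial k, (X : Polynomial k) ^ ℓ ∣ a → a ∈ R := by
    rintro a ⟨b, hb⟩
    have : a = X ^ c₀ * (X ^ (ℓ - c₀) * b) := by
      rw [hb, ← mul_assoc, ← pow_add, Nat.add_sub_cancel' hℓc]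
    rw [this]; exact hR _
  -- key lemma
  have key : ∀ p q : Polynomial k, p.eval 0 = 1 → p ∈ R →
      (X : Polynomial k) ^ ℓ ∣ p * q - 1 → q ∈ R := by
    intro p q hp hpR hd
    set h : Polynomial k := 1 - p with hh
    have hX : (X : Polynomial k) ∣ h := by
      rw [Polynomial.X_dvd_iff, Polynomial.coeff_zero_eq_eval_zero]
      simp [hh, hp]
    set w : Polynomial k := ∑ i ∈ Finset.range ℓ, h ^ i with hw
    have hwR : w ∈ R := by
      refine Subalgebra.sum_mem R fun i _ => pow_mem ?_ i
      exact sub_mem (one_mem R) hpR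
    have hpw : p * w - 1 = -(h ^ ℓ) := by
      have := geom_sum_mul h ℓ
      have hp' : p = 1 - h := by rw [hh]; ring
      rw [hp']
      linear_combination -this
    have hd2 : (X : Polynomial k) ^ ℓ ∣ p * w - 1 := by
      rw [hpw]
      exact (pow_dvd_pow_of_dvd hX ℓ).neg_right
    have hid : q - w = w * (p * q - 1) - q * (p * w - 1) := by ring
    have : q - w ∈ R := hXR _ (by
      rw [hid]
      exact dvd_sub (hd.mul_left w) (hd2.mul_left q))
    have := add_mem hwR this
    simpa using this
  constructor
  · intro hfR
    exact key f g hf hfR hdvd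
  · intro hgR
    have hg0 : g.eval 0 = 1 := by
      obtain ⟨b, hb⟩ := hdvd
      have := congrArg (Polynomial.eval 0) hb
      simp only [eval_sub, eval_mul, eval_one, eval_pow, eval_X, hf, one_mul] at this
      rw [zero_pow (by omega : ℓ ≠ 0), zero_mul] at this
      linear_combination this
    exact key g f hg0 hgR (by rwa [mul_comm])
end

section
/- Let k be a field, S = k[t], R a core of S with t^{c₀}S ⊆ R, and f ∈ S with f(0) = 1. Let c, ℓ ≥ c₀ be integers with ℓ ≥ 2, and let g ∈ S be the unique polynomial of degree < ℓ with f·g ≡ 1 mod t^ℓ S. Then the ideal I = fS ∩ R of R is generated by the two elements t^c·f and f·g; in particular I is generated by at most 2 elements. -/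
open Polynomial

/-- for a core `R` of `S = k[t]`, `f ∈ S` with `f(0) = 1`, integers
`c, ℓ ≥ c₀` with `ℓ ≥ 2`, and `g` the unique polynomial of degree `< ℓ` with
`f·g ≡ 1 mod t^ℓ S`, the ideal `I = fS ∩ R` of `R` is generated by the two
elements `t^c·f` and `f·g`. -/
theorem contraction_two_generated
    (k : Type*) [Field k] (R : Subalgebra k (Polynomial k))
    (c₀ : ℕ) (hc₀ : 0 < c₀) (hR : ∀ s : Polynomial k, (X : Polynomial k) ^ c₀ * s ∈ R)
    (f : Polynomial k) (hf : f.eval 0 = 1)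
    (c ℓ : ℕ) (hc : c₀ ≤ c) (hℓ2 : 2 ≤ ℓ) (hℓc : c₀ ≤ ℓ)
    (g : Polynomial k) (hgdeg : g.degree < (ℓ : ℕ))
    (hg : f * g - 1 ∈ Ideal.span {(X : Polynomial k) ^ ℓ}) :
    (Ideal.span {f}).comap (algebraMap R (Polynomial k)) =
      Ideal.span {x : R | (x : Polynomial k) = (X : Polynomial k) ^ c * f ∨
        (x : Polynomial k) = f * g} := by
  rw [Ideal.mem_span_singleton] at hg
  obtain ⟨m, hm⟩ := hg
  -- helper: anything in X^n * S with n ≥ c₀ lies in R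
  have hXR : ∀ (n : ℕ) (s : Polynomial k), c₀ ≤ n → (X : Polynomial k) ^ n * s ∈ R := by
    intro n s h
    have : (X : Polynomial k) ^ n * s = X ^ c₀ * (X ^ (n - c₀) * s) := by
      rw [← mul_assoc, ← pow_add]
      congr 2
      omega
    rw [this]; exact hR _
  have hg1 : (X : Polynomial k) ^ c * f ∈ R := hXR c f hc
  have hg2 : f * g ∈ R := by
    have : f * g = 1 + X ^ ℓ * m := by linear_combination hm
    rw [this]; exact add_mem (one_mem R) (hXR ℓ m hℓc)
  set N := c + c₀ with hN
  set e : Polynomial k := 1 - f * g with he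
  have heX : e = X ^ ℓ * (-m) := by rw [he]; linear_combination -hm
  set u : Polynomial k := f * ∑ i ∈ Finset.range (N + 1), e ^ i with hu
  have hgu : g * u = 1 - e ^ (N + 1) := by
    have h1 := geom_sum_mul e (N + 1)
    rw [hu]
    linear_combination -h1 - (∑ i ∈ Finset.range (N + 1), e ^ i) * he
  have huf : ∃ w, u - f = X ^ ℓ * w := by
    refine ⟨f * ((-m) * ∑ i ∈ Finset.range N, e ^ i), ?_⟩
    rw [hu, geom_sum_succ]
    linear_combination (f * ∑ i ∈ Finset.range N, e ^ i) * heX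
  obtain ⟨w, hw⟩ := huf
  have heN : ∃ em, e ^ (N + 1) = X ^ N * em := by
    have hdvd : (X : Polynomial k) ^ N ∣ e ^ (N + 1) := by
      have h2 : (X : Polynomial k) ^ (ℓ * (N + 1)) ∣ e ^ (N + 1) := by
        rw [heX, mul_pow, ← pow_mul]
        exact Dvd.intro _ rfl
      exact dvd_trans (pow_dvd_pow X
        (le_trans (Nat.le_succ N) (Nat.le_mul_of_pos_left _ (by omega)))) h2
    obtain ⟨em, hem⟩ := hdvd
    exact ⟨em, hem⟩
  obtain ⟨em, hem⟩ := heN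
  apply le_antisymm
  · intro x hx
    rw [Ideal.mem_comap, Ideal.mem_span_singleton] at hx
    obtain ⟨q, hq⟩ := hx
    have hq' : (x : Polynomial k) = f * q := hq
    -- b = u * q ∈ R
    have hbR : u * q ∈ R := by
      have : u * q = (x : Polynomial k) + X ^ ℓ * (w * q) := by
        linear_combination -hq' + q * hw
      rw [this]; exact add_mem x.2 (hXR ℓ (w * q) hℓc)
    have haR : (X : Polynomial k) ^ c₀ * (q * em) ∈ R := hR _
    set a : R := ⟨X ^ c₀ * (q * em), haR⟩ with ha
    set b : R := ⟨u * q, hbR⟩ with hb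
    have key : x = a * ⟨X ^ c * f, hg1⟩ + b * ⟨f * g, hg2⟩ := by
      apply Subtype.ext
      push_cast
      rw [hN] at hem
      linear_combination hq' - (q * f) * hgu + (q * f) * hem
    rw [key]
    refine Ideal.add_mem _ (Ideal.mul_mem_left _ a (Ideal.subset_span ?_))
      (Ideal.mul_mem_left _ b (Ideal.subset_span ?_))
    · exact Or.inl rfl
    · exact Or.inr rfl
  · rw [Ideal.span_le]
    rintro x (h1 | h2) <;>
      rw [SetLike.mem_coe, Ideal.mem_comap, Ideal.mem_span_singleton]
    · exact ⟨X ^ c, by show (x : Polynomial k) = _; rw [h1]; ring⟩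
    · exact ⟨g, by show (x : Polynomial k) = _; rw [h2]⟩
end

section
/- Let k be a field, S = k[t], R a core of S, and f ∈ S with f(0) = 1. Then the extension to S of the ideal I = fS ∩ R of R equals fS, i.e., (fS ∩ R)·S = fS. -/
open Polynomial

/-- for a core `R` of `S = k[t]` and `f ∈ S` with `f(0) = 1`, the
extension to `S` of the ideal `I = fS ∩ R` equals `fS`. -/
theorem extension_of_contraction_eq
    (k : Type*) [Field k] (R : Subalgebra k (Polynomial k))
    (c₀ : ℕ) (hc₀ : 0 < c₀) (hR : ∀ s : Polynomial k, (X : Polynomial k) ^ c₀ * s ∈ R)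
    (f : Polynomial k) (hf : f.eval 0 = 1) :
    ((Ideal.span {f}).comap (algebraMap R (Polynomial k))).map
        (algebraMap R (Polynomial k)) = Ideal.span {f} := by
  apply le_antisymm (Ideal.map_comap_le)
  rw [Ideal.span_le, Set.singleton_subset_iff]
  -- f is coprime to X^c₀
  have hXf : IsCoprime ((X : Polynomial k) ^ c₀) f := by
    apply IsCoprime.pow_left
    rw [(Polynomial.prime_X (R := k)).irreducible.coprime_iff_not_dvd, X_dvd_iff,
      ← Polynomial.coeff_zero_eq_eval_zero] at *
    simp [hf]
  obtain ⟨a, b, hab⟩ := hXf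
  -- f * b ∈ R
  have hfb : f * b ∈ R := by
    have : f * b = 1 - X ^ c₀ * a := by linear_combination hab
    rw [this]
    exact R.sub_mem R.one_mem (hR a)
  have h1 : (⟨f * b, hfb⟩ : R) ∈ (Ideal.span {f}).comap (algebraMap R (Polynomial k)) := by
    simp only [Ideal.mem_comap]
    exact Ideal.mem_span_singleton.2 ⟨b, rfl⟩
  have h2 : (⟨X ^ c₀ * f, hR f⟩ : R) ∈ (Ideal.span {f}).comap (algebraMap R (Polynomial k)) := by
    simp only [Ideal.mem_comap]
    exact Ideal.mem_span_singleton.2 ⟨X ^ c₀, mul_comm _ _⟩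
  have e1 := Ideal.mem_map_of_mem (algebraMap R (Polynomial k)) h1
  have e2 := Ideal.mem_map_of_mem (algebraMap R (Polynomial k)) h2
  have key : f = (algebraMap R (Polynomial k)) (⟨f * b, hfb⟩ : R) * f
      + (algebraMap R (Polynomial k)) (⟨X ^ c₀ * f, hR f⟩ : R) * a := by
    show f = f * b * f + X ^ c₀ * f * a
    linear_combination (-f) * hab
  have := Ideal.add_mem _ (Ideal.mul_mem_right f _ e1) (Ideal.mul_mem_right a _ e2)
  rwa [← key] at this
end

section
/- Let k be a field, S = k[t], R a core of S, and f ∈ S with f(0) = 1. Then the ideal I = fS ∩ R is a principal ideal of R if and only if f ∈ R; and in that case I = fR. -/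
open Polynomial

/-- Key lemma: if `f ∈ R`, `f(0) = 1`, and `X^c₀ S ⊆ R`, then `f*s ∈ R → s ∈ R`. -/
lemma key_div_lemma (k : Type*) [Field k] (R : Subalgebra k (Polynomial k))
    (c₀ : ℕ) (hR : ∀ s : Polynomial k, (X : Polynomial k) ^ c₀ * s ∈ R)
    (f : Polynomial k) (hf : f.eval 0 = 1) (hfR : f ∈ R)
    (s : Polynomial k) (hs : f * s ∈ R) : s ∈ R := by
  have h0 : (1 - f).coeff 0 = 0 := by
    simp [coeff_sub, coeff_zero_eq_eval_zero, hf]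
  obtain ⟨g, hg⟩ : (X : Polynomial k) ∣ (1 - f) := X_dvd_iff.mpr h0
  set P : Polynomial k := ∑ j ∈ Finset.range c₀, (1 - f) ^ j with hPdef
  have hP : P ∈ R := Subalgebra.sum_mem R fun j _ => pow_mem (sub_mem (one_mem R) hfR) j
  have hfP : f * P = 1 - (1 - f) ^ c₀ := by
    have := geom_sum_mul (1 - f) c₀
    rw [hPdef]
    linear_combination -this
  have hg' : (1 - f) ^ c₀ = X ^ c₀ * g ^ c₀ := by rw [hg, mul_pow]
  have hrep : s = (f * s) * P + X ^ c₀ * (g ^ c₀ * s) := by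
    linear_combination s * hg' - s * hfP
  rw [hrep]
  exact add_mem (mul_mem hs hP) (hR _)

/-- for a core `R` of `S = k[t]` and `f ∈ S` with `f(0) = 1`, the
ideal `I = fS ∩ R` is principal iff `f ∈ R`, and in that case `I = fR`. -/
theorem contraction_principal_iff
    (k : Type*) [Field k] (R : Subalgebra k (Polynomial k))
    (c₀ : ℕ) (hc₀ : 0 < c₀) (hR : ∀ s : Polynomial k, (X : Polynomial k) ^ c₀ * s ∈ R)
    (f : Polynomial k) (hf : f.eval 0 = 1) :
    (((Ideal.span {f}).comap (algebraMap R (Polynomial k))).IsPrincipal ↔ f ∈ R) ∧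
      (f ∈ R → (Ideal.span {f}).comap (algebraMap R (Polynomial k)) =
        Ideal.span {x : R | (x : Polynomial k) = f}) := by
  classical
  have hf0 : f ≠ 0 := by
    intro h; rw [h] at hf; simp at hf
  -- Part 2
  have h2 : ∀ hfR : f ∈ R, (Ideal.span {f}).comap (algebraMap R (Polynomial k)) =
      Ideal.span {x : R | (x : Polynomial k) = f} := by
    intro hfR
    have hsing : {x : R | (x : Polynomial k) = f} = {(⟨f, hfR⟩ : R)} := by
      ext x
      simp [Subtype.ext_iff]
    rw [hsing]
    ext x
    rw [Ideal.mem_comap, Ideal.mem_span_singleton, Ideal.mem_span_singleton]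
    constructor
    · rintro ⟨s, hs⟩
      have hsR : s ∈ R := by
        apply key_div_lemma k R c₀ hR f hf hfR
        rw [← hs]; exact x.2
      exact ⟨⟨s, hsR⟩, Subtype.ext hs⟩
    · rintro ⟨a, ha⟩
      exact ⟨(a : Polynomial k), by rw [ha]; rfl⟩
  refine ⟨⟨?_, ?_⟩, h2⟩
  · -- principal → f ∈ R
    rintro ⟨r₀, hI⟩
    have hex : ∃ e : ℕ, ∀ s : Polynomial k, (X : Polynomial k) ^ e * s ∈ R := ⟨c₀, hR⟩
    set d := Nat.find hex with hd_def
    have hd : ∀ s : Polynomial k, (X : Polynomial k) ^ d * s ∈ R := Nat.find_spec hex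
    have hr₀I : r₀ ∈ (Ideal.span {f}).comap (algebraMap R (Polynomial k)) := by
      rw [hI]; exact Ideal.mem_span_singleton_self r₀
    rw [Ideal.mem_comap, Ideal.mem_span_singleton] at hr₀I
    obtain ⟨u, hu⟩ := hr₀I
    have hq : ∀ s : Polynomial k, ∃ q : R, X ^ d * s = u * (q : Polynomial k) := by
      intro s
      have h1 : (X : Polynomial k) ^ d * (f * s) ∈ R := hd (f * s)
      have h2' : (⟨X ^ d * (f * s), h1⟩ : R) ∈
          (Ideal.span {f}).comap (algebraMap R (Polynomial k)) := by
        rw [Ideal.mem_comap, Ideal.mem_span_singleton]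
        exact ⟨X ^ d * s, by show X ^ d * (f * s) = f * (X ^ d * s); ring⟩
      rw [hI] at h2'
      obtain ⟨q, hq'⟩ := Ideal.mem_span_singleton.mp h2'
      refine ⟨q, mul_left_cancel₀ hf0 ?_⟩
      have hcoe : (X : Polynomial k) ^ d * (f * s) = (r₀ : Polynomial k) * (q : Polynomial k) := by
        have := congrArg (Subtype.val) hq'
        simpa using this
      have hu2 : (r₀ : Polynomial k) = f * u := hu
      rw [hu2] at hcoe
      linear_combination hcoe
    obtain ⟨q1, hq1⟩ := hq 1
    have hudvd : u ∣ (X : Polynomial k) ^ d := ⟨(q1 : Polynomial k), by rw [← hq1, mul_one]⟩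
    obtain ⟨m, hm, hass⟩ := (dvd_prime_pow prime_X d).mp hudvd
    obtain ⟨w, hw⟩ := hass
    obtain ⟨c, hc, hCc⟩ := Polynomial.isUnit_iff.mp w.isUnit
    have hcne : c ≠ 0 := hc.ne_zero
    -- u * w = X ^ m, so u = X ^ m * C c⁻¹
    have hu' : u = X ^ m * C c⁻¹ := by
      have h1 : u * C c = X ^ m := by rw [hCc, hw]
      have : u * C c * C c⁻¹ = X ^ m * C c⁻¹ := by rw [h1]
      rw [mul_assoc, ← C_mul, mul_inv_cancel₀ hcne, C_1, mul_one] at this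
      exact this
    have hm0 : m = 0 := by
      by_contra hm0
      have hdpos : 0 < d := lt_of_lt_of_le (Nat.pos_of_ne_zero hm0) hm
      have hlt : d - m < d := Nat.sub_lt hdpos (Nat.pos_of_ne_zero hm0)
      apply Nat.find_min hex hlt
      intro s
      obtain ⟨q, hqs⟩ := hq s
      have hXm : (X : Polynomial k) ^ m ≠ 0 := pow_ne_zero _ X_ne_zero
      have heq : (X : Polynomial k) ^ (d - m) * s = C c⁻¹ * (q : Polynomial k) := by
        apply mul_left_cancel₀ hXm
        have hdm : m + (d - m) = d := Nat.add_sub_cancel' hm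
        calc (X : Polynomial k) ^ m * (X ^ (d - m) * s) = X ^ d * s := by
              rw [← mul_assoc, ← pow_add, hdm]
          _ = u * (q : Polynomial k) := hqs
          _ = X ^ m * (C c⁻¹ * (q : Polynomial k)) := by rw [hu']; ring
      rw [heq]
      have : (C c⁻¹ : Polynomial k) ∈ R := by
        have := R.algebraMap_mem c⁻¹
        rwa [Polynomial.algebraMap_eq] at this
      exact mul_mem this q.2
    rw [hm0, pow_zero, one_mul] at hu'
    have hu2 : (r₀ : Polynomial k) = f * u := hu
    have : f = C c * (r₀ : Polynomial k) := by
      have hcc : (C c : Polynomial k) * C c⁻¹ = 1 := by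
        rw [← C_mul, mul_inv_cancel₀ hcne, C_1]
      rw [hu2, hu']
      linear_combination (-f) * hcc
    rw [this]
    have hCcR : (C c : Polynomial k) ∈ R := by
      have := R.algebraMap_mem c
      rwa [Polynomial.algebraMap_eq] at this
    exact mul_mem hCcR r₀.2
  · -- f ∈ R → principal
    intro hfR
    rw [h2 hfR]
    have hsing : {x : R | (x : Polynomial k) = f} = {(⟨f, hfR⟩ : R)} := by
      ext x; simp [Subtype.ext_iff]
    rw [hsing]
    exact ⟨⟨⟨f, hfR⟩, rfl⟩⟩
end

section
/- Let k be a field, S = k[t], R a core of S, and f ∈ S with f(0) = 1. Then the ideal I = fS ∩ R is an invertible ideal of R (equivalently, I is locally principal at every prime of R and nonzero). -/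
open Polynomial

/-- for a core `R` of `S = k[t]` and `f ∈ S` with `f(0) = 1`, the ideal
`I = fS ∩ R` is invertible: it is nonzero and locally principal at every prime of `R`. -/
theorem contraction_invertible
    (k : Type*) [Field k] (R : Subalgebra k (Polynomial k))
    (c₀ : ℕ) (hc₀ : 0 < c₀) (hR : ∀ s : Polynomial k, (X : Polynomial k) ^ c₀ * s ∈ R)
    (f : Polynomial k) (hf : f.eval 0 = 1) :
    (Ideal.span {f}).comap (algebraMap R (Polynomial k)) ≠ ⊥ ∧
      ∀ P : Ideal R, ∀ hP : P.IsPrime,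
        letI := hP
        (((Ideal.span {f}).comap (algebraMap R (Polynomial k))).map
            (algebraMap R (Localization.AtPrime P))).IsPrincipal := by
  have hf0 : f ≠ 0 := fun h => by simp [h] at hf
  have halg : ∀ r : R, algebraMap R (Polynomial k) r = (r : Polynomial k) := fun r => rfl
  set I := (Ideal.span {f}).comap (algebraMap R (Polynomial k)) with hI
  have memI : ∀ r : R, r ∈ I ↔ f ∣ (r : Polynomial k) := by
    intro r
    rw [hI, Ideal.mem_comap, halg, Ideal.mem_span_singleton]
  constructor
  · rw [Submodule.ne_bot_iff]
    refine ⟨⟨X ^ c₀ * f, hR f⟩, ?_, ?_⟩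
    · rw [memI]; exact dvd_mul_left f (X ^ c₀)
    · intro h
      have h' : (X : Polynomial k) ^ c₀ * f = 0 := congrArg Subtype.val h
      exact hf0 ((mul_eq_zero.mp h').resolve_left (pow_ne_zero _ X_ne_zero))
  · intro P hP
    letI := hP
    have hXg : X ∣ (1 - f) := by
      rw [X_dvd_iff, coeff_zero_eq_eval_zero]; simp [hf]
    obtain ⟨s, hs⟩ := pow_dvd_pow_of_dvd hXg c₀
    have hw : f * (∑ i ∈ Finset.range c₀, (1 - f) ^ i) = 1 - X ^ c₀ * s := by
      have hgeo := geom_sum_mul (1 - f) c₀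
      linear_combination -hgeo - hs
    set wr : R := ⟨1 - X ^ c₀ * s, sub_mem (one_mem R) (hR s)⟩ with hwr
    have hwI : wr ∈ I := (memI wr).mpr ⟨_, hw.symm⟩
    set xc : R := ⟨X ^ c₀, by simpa using hR 1⟩ with hxcdef
    by_cases hxc : xc ∈ P
    · -- X^c₀ ∈ P : then wr ∉ P, so the localized ideal is the unit ideal
      have hwP : wr ∉ P := by
        intro hw'
        have hu : (⟨X ^ c₀ * s, hR s⟩ : R) ∈ P := by
          apply hP.mem_of_pow_mem 2
          have heq : (⟨X ^ c₀ * s, hR s⟩ : R) ^ 2 = xc * ⟨X ^ c₀ * (s * s), hR (s * s)⟩ :=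
            Subtype.ext (by push_cast; ring)
          rw [heq]
          exact Ideal.mul_mem_right _ _ hxc
        have h1 : (1 : R) ∈ P := by
          have h1' : (1 : R) = wr + ⟨X ^ c₀ * s, hR s⟩ := Subtype.ext (by push_cast; ring)
          rw [h1']
          exact P.add_mem hw' hu
        exact hP.ne_top ((Ideal.eq_top_iff_one P).mpr h1)
      have htop : I.map (algebraMap R (Localization.AtPrime P)) = ⊤ := by
        apply Ideal.eq_top_of_isUnit_mem _ (Ideal.mem_map_of_mem _ hwI)
        exact IsLocalization.map_units (Localization.AtPrime P) (⟨wr, hwP⟩ : P.primeCompl)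
      exact ⟨1, by rw [htop]; exact Ideal.span_singleton_one.symm⟩
    · -- X^c₀ ∉ P : the image of X^c₀·f generates
      set w₀ : R := ⟨X ^ c₀ * f, hR f⟩ with hw₀def
      have hw₀I : w₀ ∈ I := (memI w₀).mpr (dvd_mul_left f (X ^ c₀))
      refine ⟨algebraMap R (Localization.AtPrime P) w₀, le_antisymm ?_ ?_⟩
      · rw [Ideal.map_le_iff_le_comap]
        intro a ha
        obtain ⟨q, hq⟩ := (memI a).mp ha
        rw [Ideal.mem_comap]
        obtain ⟨u, hu⟩ := IsLocalization.map_units (Localization.AtPrime P)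
          (⟨xc ^ 2, fun h => hxc (hP.mem_of_pow_mem 2 h)⟩ : P.primeCompl)
        have key : a * xc ^ 2 = w₀ * ⟨X ^ c₀ * q, hR q⟩ := Subtype.ext (by push_cast [hq]; ring)
        have hmap := congrArg (algebraMap R (Localization.AtPrime P)) key
        rw [map_mul, map_mul, ← hu] at hmap
        have ha' : algebraMap R (Localization.AtPrime P) a =
            (algebraMap R (Localization.AtPrime P) w₀ *
              algebraMap R (Localization.AtPrime P) ⟨X ^ c₀ * q, hR q⟩) * ↑u⁻¹ :=
          (Units.eq_mul_inv_iff_mul_eq u).mpr hmap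
        exact Ideal.mem_span_singleton'.mpr
          ⟨algebraMap R (Localization.AtPrime P) ⟨X ^ c₀ * q, hR q⟩ * ↑u⁻¹,
            by rw [ha']; ring⟩
      · exact Ideal.span_le.mpr
          (Set.singleton_subset_iff.mpr (Ideal.mem_map_of_mem _ hw₀I))
end

section
/- Let k be a field, S = k[t], R a core of S with t^{c}S ⊆ R (c ≥ 1), and R = k[t^e, t^{e+1}, ..., t^{2e-1}] for some integer e ≥ 2. Let 0 ≠ α ∈ k and f = 1 − αt. Then the maximal ideal M = fS ∩ R satisfies M = (t^e − α t^{e+1}, 1 − α^e t^e) as an ideal of R. -/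
open Polynomial

/-!
Since `t^e S ⊆ R`, the generators `g₁ = t^e f` and `g₂ = 1 - α^e t^e` lie in `R`, and both are
divisible by `f` (for `g₂`, because `1 - αt ∣ 1 - (αt)^e`). Conversely, if `x = f u ∈ R`, then the
identity `(1 + α^e t^e) g₂ = 1 - α^{2e} t^{2e}` gives
`x = x (1 + α^e t^e) · g₂ + α^{2e} t^e u · g₁`, and both coefficients lie in `R`.
-/

namespace Polynomial

section Adjoin

variable {k : Type*} [CommSemiring k] {e : ℕ}

theorem X_pow_mem_adjoin_X_pow_Icc (he : 0 < e) {i : ℕ} (hi : e ≤ i) :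
    (X : k[X]) ^ i ∈
      Algebra.adjoin k {p : k[X] | ∃ i : ℕ, e ≤ i ∧ i ≤ 2 * e - 1 ∧ p = X ^ i} := by
  induction i using Nat.strong_induction_on with
  | _ i ih =>
    by_cases hi' : i ≤ 2 * e - 1
    · exact Algebra.subset_adjoin ⟨i, hi, hi', rfl⟩
    · rw [show i = e + (i - e) by omega, pow_add]
      exact mul_mem (Algebra.subset_adjoin ⟨e, le_rfl, by omega, rfl⟩) (ih _ (by omega) (by omega))

theorem X_pow_mul_mem_adjoin_X_pow_Icc (he : 0 < e) (p : k[X]) :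
    X ^ e * p ∈ Algebra.adjoin k {p : k[X] | ∃ i : ℕ, e ≤ i ∧ i ≤ 2 * e - 1 ∧ p = X ^ i} := by
  induction p using Polynomial.induction_on' with
  | add p q hp hq => rw [mul_add]; exact add_mem hp hq
  | monomial n c =>
    rw [← C_mul_X_pow_eq_monomial, mul_left_comm, ← pow_add, ← smul_eq_C_mul]
    exact Subalgebra.smul_mem _ (X_pow_mem_adjoin_X_pow_Icc he (by omega)) c

end Adjoin

variable {k : Type*} [CommRing k]

theorem one_sub_C_mul_X_dvd_one_sub_C_pow_mul_X_pow (α : k) (e : ℕ) :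
    1 - C α * X ∣ 1 - C (α ^ e) * X ^ e := by
  have h := sub_dvd_pow_sub_pow (1 : k[X]) (C α * X) e
  rwa [one_pow, mul_pow, ← C_pow] at h

theorem comap_span_one_sub_C_mul_X_of_X_pow_mul_mem {R : Subalgebra k k[X]} {e : ℕ}
    (hR : ∀ p : k[X], X ^ e * p ∈ R) (α : k) :
    (Ideal.span {1 - C α * X}).comap (algebraMap R k[X]) =
      Ideal.span {x : R |
        (x : k[X]) = X ^ e - C α * X ^ (e + 1) ∨ (x : k[X]) = 1 - C (α ^ e) * X ^ e} := by
  have hmem : ∀ (c : k) (p : k[X]), C c + X ^ e * p ∈ R := fun c p =>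
    add_mem (R.algebraMap_mem c) (hR p)
  have hg₁ : X ^ e - C α * X ^ (e + 1) = X ^ e * (1 - C α * X) := by ring
  have hg₂ : 1 - C (α ^ e) * X ^ e = C 1 + X ^ e * -C (α ^ e) := by simp only [map_one]; ring
  apply le_antisymm
  · intro x hx
    obtain ⟨u, hu⟩ := Ideal.mem_span_singleton'.mp hx
    let g₁ : R := ⟨_, hg₁ ▸ hR (1 - C α * X)⟩
    let g₂ : R := ⟨_, hg₂ ▸ hmem 1 (-C (α ^ e))⟩
    have hdecomp : x = x * ⟨_, hmem 1 (C (α ^ e))⟩ * g₂ + ⟨_, hR (C (α ^ (2 * e)) * u)⟩ * g₁ := by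
      ext1
      simp only [Subalgebra.coe_add, Subalgebra.coe_mul, g₁, g₂]
      rw [← show u * (1 - C α * X) = (x : k[X]) from hu]
      simp only [map_one, map_pow, pow_mul]
      ring
    rw [hdecomp]
    exact add_mem (Ideal.mul_mem_left _ _ (Ideal.subset_span (Or.inr rfl)))
      (Ideal.mul_mem_left _ _ (Ideal.subset_span (Or.inl rfl)))
  · rw [Ideal.span_le]
    rintro x (hx | hx) <;> rw [SetLike.mem_coe, Ideal.mem_comap, Ideal.mem_span_singleton] <;>
      change _ ∣ (x : k[X]) <;> rw [hx]
    · exact hg₁ ▸ dvd_mul_left _ _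
    · exact one_sub_C_mul_X_dvd_one_sub_C_pow_mul_X_pow α e

end Polynomial

theorem max_ideal_two_gens_full_semigroup_general
    (k : Type*) [Field k] (e : ℕ) (he : 2 ≤ e)
    (R : Subalgebra k (Polynomial k))
    (hRdef : R = Algebra.adjoin k
      {p : Polynomial k | ∃ i : ℕ, e ≤ i ∧ i ≤ 2 * e - 1 ∧ p = (X : Polynomial k) ^ i})
    (α : k)
    (f : Polynomial k) (hfdef : f = 1 - C α * X) :
    (Ideal.span {f}).comap (algebraMap R (Polynomial k)) =
      Ideal.span {x : R |
        (x : Polynomial k) = (X : Polynomial k) ^ e - C α * X ^ (e + 1) ∨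
        (x : Polynomial k) = 1 - C (α ^ e) * X ^ e} := by
  subst hRdef hfdef
  exact comap_span_one_sub_C_mul_X_of_X_pow_mul_mem
    (X_pow_mul_mem_adjoin_X_pow_Icc (by omega)) α

/-- for `R = k[t^e, t^{e+1}, …, t^{2e-1}]` (`e ≥ 2`), `0 ≠ α ∈ k` and
`f = 1 − αt`, the maximal ideal `M = fS ∩ R` equals
`(t^e − α t^{e+1}, 1 − α^e t^e)`. -/
theorem max_ideal_two_gens_full_semigroup
    (k : Type*) [Field k] (e : ℕ) (he : 2 ≤ e)
    (R : Subalgebra k (Polynomial k))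
    (hRdef : R = Algebra.adjoin k
      {p : Polynomial k | ∃ i : ℕ, e ≤ i ∧ i ≤ 2 * e - 1 ∧ p = (X : Polynomial k) ^ i})
    (α : k) (hα : α ≠ 0)
    (f : Polynomial k) (hfdef : f = 1 - C α * X) :
    (Ideal.span {f}).comap (algebraMap R (Polynomial k)) =
      Ideal.span {x : R |
        (x : Polynomial k) = (X : Polynomial k) ^ e - C α * X ^ (e + 1) ∨
        (x : Polynomial k) = 1 - C (α ^ e) * X ^ e} :=
  max_ideal_two_gens_full_semigroup_general k e he R hRdef α f hfdef
end

section
/- Let k be a field, S = k[t], R a core of S, and I a nonzero ideal of R with IS = t^q f S where q ≥ 0 and f ∈ S with f(0) = 1. Then the integral closure of I in R satisfies Ī = (t^qS ∩ R) ∩ (fS ∩ R) = (t^qS ∩ R)·(fS ∩ R). -/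
set_option synthInstance.maxHeartbeats 400000

open Polynomial

/-- for a core `R` of `S = k[t]` and a nonzero ideal `I` of `S` with
`IS = t^q f S` (`q ≥ 0`, `f(0) = 1`), the integral closure `Ī = IS ∩ R` satisfies
`Ī = (t^qS ∩ R) ∩ (fS ∩ R) = (t^qS ∩ R)·(fS ∩ R)`. -/
theorem integral_closure_eq_inf_eq_mul
    (k : Type*) [Field k] (R : Subalgebra k (Polynomial k))
    (c₀ : ℕ) (hc₀ : 0 < c₀) (hR : ∀ s : Polynomial k, (X : Polynomial k) ^ c₀ * s ∈ R)
    (I : Ideal R) (hI : I ≠ ⊥) (q : ℕ) (f : Polynomial k) (hf : f.eval 0 = 1)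
    (hIS : I.map (algebraMap R (Polynomial k)) =
      Ideal.span {(X : Polynomial k) ^ q * f}) :
    (I.map (algebraMap R (Polynomial k))).comap (algebraMap R (Polynomial k)) =
        (Ideal.span {(X : Polynomial k) ^ q}).comap (algebraMap R (Polynomial k)) ⊓
          (Ideal.span {f}).comap (algebraMap R (Polynomial k)) ∧
      (I.map (algebraMap R (Polynomial k))).comap (algebraMap R (Polynomial k)) =
        (Ideal.span {(X : Polynomial k) ^ q}).comap (algebraMap R (Polynomial k)) *
          (Ideal.span {f}).comap (algebraMap R (Polynomial k)) := by
  rw [hIS]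
  have hA : ∀ x : R, algebraMap R (Polynomial k) x = (x : Polynomial k) := fun x => rfl
  -- X divides 1 - f
  obtain ⟨d, hd⟩ : (X : Polynomial k) ∣ (1 - f) := by
    rw [Polynomial.X_dvd_iff]
    simp [coeff_zero_eq_eval_zero, hf]
  have hcop : IsCoprime ((X : Polynomial k) ^ q) f := by
    apply IsCoprime.pow_left
    exact ⟨d, 1, by linear_combination -hd⟩
  constructor
  · ext r
    simp only [Ideal.mem_comap, Ideal.mem_inf, Ideal.mem_span_singleton]
    exact ⟨fun h => ⟨(dvd_mul_right _ _).trans h, (dvd_mul_left _ _).trans h⟩,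
      fun h => hcop.mul_dvd h.1 h.2⟩
  · set g : Polynomial k := ∑ i ∈ Finset.range (2 * c₀), (1 - f) ^ i with hg
    have h2 : f * g = 1 - (1 - f) ^ (2 * c₀) := by
      have h := geom_sum_mul (1 - f) (2 * c₀)
      rw [← hg] at h
      linear_combination -h
    have h3 : (1 - f) ^ (2 * c₀) = X ^ (2 * c₀) * d ^ (2 * c₀) := by
      rw [hd, mul_pow]
    have hfg : f * g = 1 - X ^ (2 * c₀) * d ^ (2 * c₀) := by rw [h2, h3]
    have hbR : f * g ∈ R := by
      have h4 : f * g = 1 + X ^ c₀ * (-(X ^ c₀ * d ^ (2 * c₀))) := by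
        rw [hfg, two_mul, pow_add]; ring
      rw [h4]
      exact R.add_mem R.one_mem (hR _)
    apply le_antisymm
    · intro r hr
      rw [Ideal.mem_comap, hA, Ideal.mem_span_singleton] at hr
      obtain ⟨s, hs⟩ := hr
      set b0 : R := ⟨f * g, hbR⟩ with hb0def
      set a1 : R := ⟨X ^ c₀ * (X ^ q * (s * d ^ (2 * c₀))), hR _⟩ with ha1def
      set b1 : R := ⟨X ^ c₀ * f, hR f⟩ with hb1def
      have hr1 : r ∈ (Ideal.span {(X : Polynomial k) ^ q}).comap
          (algebraMap R (Polynomial k)) := by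
        rw [Ideal.mem_comap, hA, Ideal.mem_span_singleton]
        exact ⟨f * s, by rw [hs]; ring⟩
      have hb0 : b0 ∈ (Ideal.span {f}).comap (algebraMap R (Polynomial k)) := by
        rw [Ideal.mem_comap, hA, Ideal.mem_span_singleton]
        exact Dvd.intro g rfl
      have ha1 : a1 ∈ (Ideal.span {(X : Polynomial k) ^ q}).comap
          (algebraMap R (Polynomial k)) := by
        rw [Ideal.mem_comap, hA, Ideal.mem_span_singleton]
        exact ⟨X ^ c₀ * (s * d ^ (2 * c₀)), by ring⟩
      have hb1 : b1 ∈ (Ideal.span {f}).comap (algebraMap R (Polynomial k)) := by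
        rw [Ideal.mem_comap, hA, Ideal.mem_span_singleton]
        exact ⟨X ^ c₀, mul_comm _ _⟩
      have key : r = r * b0 + a1 * b1 := by
        apply Subtype.ext
        show (r : Polynomial k) = (r : Polynomial k) * (f * g) +
          (X ^ c₀ * (X ^ q * (s * d ^ (2 * c₀)))) * (X ^ c₀ * f)
        rw [hs, hfg, two_mul, pow_add]
        ring
      rw [key]
      exact Ideal.add_mem _ (Ideal.mul_mem_mul hr1 hb0) (Ideal.mul_mem_mul ha1 hb1)
    · rw [Ideal.mul_le]
      intro a ha b hb
      rw [Ideal.mem_comap, hA, Ideal.mem_span_singleton] at ha hb ⊢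
      push_cast
      exact mul_dvd_mul ha hb
end

section
/- Let k be a field, S = k[t], R a core of S with t^{c₀}S ⊆ R, and I a nonzero ideal of R with IS = t^q f S where q ≥ c₀ and f(0) = 1. Then the integral closure of I is Ī = t^q f S (an ideal of S contained in R), and μ_R(Ī) = μ_R(S), the minimal number of generators of S as an R-module. -/
open Polynomial

/-- Minimal number of generators of an ideal. -/
noncomputable def muIdeal {A : Type*} [CommRing A] (I : Ideal A) : ℕ :=
  sInf {n | ∃ s : Finset A, s.card = n ∧ Ideal.span (s : Set A) = I}

/-- Minimal number of generators of a module. -/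
noncomputable def muModule (A : Type*) (M : Type*) [CommRing A] [AddCommGroup M]
    [Module A M] : ℕ :=
  sInf {n | ∃ s : Finset M, s.card = n ∧ Submodule.span A (s : Set M) = ⊤}

/-- for a core `R` of `S = k[t]` and a nonzero ideal `I` of `R` with
`IS = t^q f S`, `q ≥ c₀`, `f(0) = 1`, the integral closure `Ī = IS ∩ R` is the ideal
`t^q f S` of `S` (which is contained in `R`), and `μ_R(Ī) = μ_R(S)`. -/
theorem integral_closure_eq_extension_and_mu
    (k : Type*) [Field k] (R : Subalgebra k (Polynomial k))
    (c₀ : ℕ) (hc₀ : 0 < c₀) (hR : ∀ s : Polynomial k, (X : Polynomial k) ^ c₀ * s ∈ R)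
    (I : Ideal R) (hI : I ≠ ⊥) (q : ℕ) (hq : c₀ ≤ q)
    (f : Polynomial k) (hf : f.eval 0 = 1)
    (hIS : I.map (algebraMap R (Polynomial k)) =
      Ideal.span {(X : Polynomial k) ^ q * f}) :
    (algebraMap R (Polynomial k)) ''
        ((I.map (algebraMap R (Polynomial k))).comap
          (algebraMap R (Polynomial k)) : Set R) =
        (Ideal.span {(X : Polynomial k) ^ q * f} : Ideal (Polynomial k)) ∧
      muIdeal ((I.map (algebraMap R (Polynomial k))).comap
          (algebraMap R (Polynomial k))) =
        muModule R (Polynomial k) := by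
  set g : Polynomial k := (X : Polynomial k) ^ q * f with hg
  have hf0 : f ≠ 0 := fun h => by simp [h] at hf
  have hg0 : g ≠ 0 := mul_ne_zero (pow_ne_zero _ X_ne_zero) hf0
  -- every element of span {g} lies in R
  have hmem : ∀ x : Polynomial k, x ∈ Ideal.span {g} → x ∈ R := by
    intro x hx
    rw [Ideal.mem_span_singleton] at hx
    obtain ⟨s, rfl⟩ := hx
    have : g * s = X ^ c₀ * (X ^ (q - c₀) * f * s) := by
      have hq' : (X : Polynomial k) ^ q = X ^ c₀ * X ^ (q - c₀) := by
        rw [← pow_add, Nat.add_sub_cancel' hq]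
      rw [hg, hq']; ring
    rw [this]
    exact hR _
  set J := (I.map (algebraMap R (Polynomial k))).comap (algebraMap R (Polynomial k)) with hJ
  have hJmem : ∀ x : R, x ∈ J ↔ (x : Polynomial k) ∈ Ideal.span {g} := by
    intro x
    rw [hJ, Ideal.mem_comap, hIS]; rfl
  constructor
  · ext x
    constructor
    · rintro ⟨r, hr, rfl⟩
      exact (hJmem r).1 hr
    · intro hx
      exact ⟨⟨x, hmem x hx⟩, (hJmem _).2 hx, rfl⟩
  · -- build linear map φ : k[X] →ₗ[R] R, s ↦ g * s
    have hmem' : ∀ s : Polynomial k, g * s ∈ R := fun s =>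
      hmem _ (Ideal.mem_span_singleton.2 ⟨s, rfl⟩)
    let φ : Polynomial k →ₗ[R] R :=
      { toFun := fun s => ⟨g * s, hmem' s⟩
        map_add' := by intro a b; apply Subtype.ext; simp [mul_add]
        map_smul' := by
          intro r a; apply Subtype.ext
          show g * ((r : Polynomial k) * a) = (r : Polynomial k) * (g * a)
          ring }
    have hφinj : Function.Injective φ := by
      intro a b hab
      have : g * a = g * b := congrArg Subtype.val hab
      exact mul_left_cancel₀ hg0 this
    have hφrange : LinearMap.range φ = (J : Submodule R R) := by
      ext x
      constructor
      · rintro ⟨s, rfl⟩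
        exact (hJmem _).2 (Ideal.mem_span_singleton.2 ⟨s, rfl⟩)
      · intro hx
        obtain ⟨s, hs⟩ := Ideal.mem_span_singleton.1 ((hJmem x).1 hx)
        exact ⟨s, Subtype.ext hs.symm⟩
    -- now show the two sInf sets are equal
    have hset : {n | ∃ s : Finset R, s.card = n ∧ Ideal.span (s : Set R) = J} =
        {n | ∃ s : Finset (Polynomial k), s.card = n ∧
          Submodule.span R (s : Set (Polynomial k)) = ⊤} := by
      ext n
      constructor
      · rintro ⟨s, hcard, hspan⟩
        classical
        have hsub : ∀ x ∈ s, x ∈ LinearMap.range φ := by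
          intro x hx
          rw [hφrange]
          rw [← hspan]
          exact Ideal.subset_span hx
        let σ : R → Polynomial k := Function.invFun φ
        have hσ : ∀ x ∈ s, φ (σ x) = x := by
          intro x hx
          obtain ⟨y, hy⟩ := hsub x hx
          exact Function.invFun_eq ⟨y, hy⟩
        refine ⟨s.image σ, ?_, ?_⟩
        · rw [Finset.card_image_of_injOn, hcard]
          intro x hx y hy hxy
          rw [← hσ x hx, ← hσ y hy, hxy]
        · apply Submodule.map_injective_of_injective hφinj
          rw [Finset.coe_image, ← Submodule.span_image, Submodule.map_top, hφrange]
          have : φ '' (σ '' (s : Set R)) = (s : Set R) := by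
            ext x
            constructor
            · rintro ⟨y, ⟨z, hz, rfl⟩, rfl⟩
              rwa [hσ z hz]
            · intro hx
              exact ⟨σ x, ⟨x, hx, rfl⟩, hσ x hx⟩
          rw [this]
          exact hspan ▸ rfl
      · rintro ⟨t, hcard, hspan⟩
        classical
        refine ⟨t.image φ, ?_, ?_⟩
        · rw [Finset.card_image_of_injective _ hφinj, hcard]
        · show Submodule.span R _ = J
          rw [Finset.coe_image, Submodule.span_image, hspan, Submodule.map_top, hφrange]
    rw [muIdeal, muModule, hset]
end

section
/- Let H be a numerical semigroup with 1 ∉ H, k a field, R = k[H] ⊆ S = k[t], and M a maximal ideal of R. Then the following are equivalent: (1) R/M ≅ k; (2) M = (α^{a} − t^{a} : a ∈ H generators) for some α ∈ k; (3) M ⊆ (α − t)S for some α ∈ k. Moreover such α is unique. -/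
/-!
A `k`-rational point of `R = k[H]` is a `k`-algebra map `φ : R → k`. Since `H` contains two
consecutive integers `N, N + 1`, the relations `t^h (t^N)^h = (t^(N+1))^h` and
`(t^h)^N = (t^N)^h` in `R` force `φ(t^h) = α^h` with `α = φ(t^(N+1)) / φ(t^N)`, so `φ` is
evaluation at `α` and `M = ker φ = R ∩ (α - t)S`. The kernel of a `k`-point of an algebra generated
by a set `s` is spanned by the elements `φ(x) - x`, `x ∈ s`, which gives the generators
`α^{aᵢ} - t^{aᵢ}`. Evaluation at `α` is recovered from `α^N` and `α^(N+1)`, whence uniqueness.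
-/

open Polynomial

-- For `u = 0` the right-hand side is `0 ^ h`, since `w / 0 = 0`.
theorem eq_div_pow_of_mul_pow_eq {K : Type*} [Field K] {z u w : K} {h N : ℕ}
    (h₁ : z * u ^ h = w ^ h) (h₂ : z ^ N = u ^ h) : z = (w / u) ^ h := by
  rcases eq_or_ne u 0 with rfl | hu
  · rcases h.eq_zero_or_pos with rfl | hpos
    · simpa using h₁
    · rw [zero_pow hpos.ne', div_zero, zero_pow hpos.ne'] at *
      exact (pow_eq_zero_iff'.mp h₂).1
  · rw [div_pow, eq_div_iff (pow_ne_zero h hu), h₁]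

theorem pow_succ_div_pow_self {K : Type*} [Field K] (α : K) (n : ℕ) :
    α ^ (n + 1) / α ^ n = α := by
  rcases eq_or_ne α 0 with rfl | hα
  · simp
  · rw [pow_succ, mul_div_cancel_left₀ _ (pow_ne_zero n hα)]

theorem Set.exists_mem_and_add_one_mem_of_finite_compl {s : Set ℕ} (hs : sᶜ.Finite) :
    ∃ n, n ∈ s ∧ n + 1 ∈ s := by
  obtain ⟨b, hb⟩ := hs.bddAbove
  have mem (n : ℕ) (hn : b < n) : n ∈ s := by_contra fun h ↦ absurd (hb h) (by omega)
  exact ⟨b + 1, mem _ (by omega), mem _ (by omega)⟩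

theorem Subalgebra.adjoin_preimage_eq_top {k A : Type*} [CommSemiring k] [Semiring A]
    [Algebra k A] {R : Subalgebra k A} {s : Set A} (h : R = Algebra.adjoin k s) :
    Algebra.adjoin k (((↑) : R → A) ⁻¹' s) = ⊤ := by
  subst h
  exact Algebra.adjoin_adjoin_coe_preimage

section PointsOfAlgebra

variable {k A : Type*} [Field k] [CommRing A] [Algebra k A]

theorem AlgHom.sub_algebraMap_mem_ker (φ : A →ₐ[k] k) (x : A) :
    x - algebraMap k A (φ x) ∈ RingHom.ker φ := by
  simp [RingHom.mem_ker]

theorem AlgHom.eq_of_ker_eq {φ ψ : A →ₐ[k] k} (h : RingHom.ker φ = RingHom.ker ψ) : φ = ψ := by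
  ext x
  have hx := h ▸ φ.sub_algebraMap_mem_ker x
  exact (sub_eq_zero.mp (by simpa [RingHom.mem_ker] using hx)).symm

theorem Ideal.bijective_algebraMap_quotient_iff (M : Ideal A) :
    Function.Bijective (algebraMap k (A ⧸ M)) ↔ ∃ φ : A →ₐ[k] k, RingHom.ker φ = M := by
  constructor
  · intro hbij
    refine ⟨((AlgEquiv.ofBijective (Algebra.ofId k (A ⧸ M)) hbij).symm : A ⧸ M →ₐ[k] k).comp
      (Ideal.Quotient.mkₐ k M), ?_⟩
    ext x
    simp [RingHom.mem_ker, Ideal.Quotient.eq_zero_iff_mem]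
  · rintro ⟨φ, rfl⟩
    have : Nontrivial (A ⧸ RingHom.ker φ) :=
      Ideal.Quotient.nontrivial_iff.mpr (RingHom.ker_ne_top φ)
    refine ⟨(algebraMap k _).injective, fun y ↦ ?_⟩
    obtain ⟨x, rfl⟩ := Ideal.Quotient.mk_surjective y
    refine ⟨φ x, ?_⟩
    rw [← Ideal.Quotient.mk_algebraMap, Ideal.Quotient.mk_eq_mk_iff_sub_mem]
    simp [RingHom.mem_ker]

theorem AlgHom.ker_eq_span_of_adjoin_eq_top (φ : A →ₐ[k] k) {s : Set A}
    (hs : Algebra.adjoin k s = ⊤) :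
    RingHom.ker φ = Ideal.span ((fun x ↦ algebraMap k A (φ x) - x) '' s) := by
  set J := Ideal.span ((fun x ↦ algebraMap k A (φ x) - x) '' s)
  refine le_antisymm (fun x hx ↦ ?_) (Ideal.span_le.mpr ?_)
  · have congr_mod_J (y : A) : algebraMap k A (φ y) - y ∈ J := by
      induction (hs ▸ Algebra.mem_top : y ∈ Algebra.adjoin k s) using Algebra.adjoin_induction with
      | mem y hy => exact Ideal.subset_span ⟨y, hy, rfl⟩
      | algebraMap c => simp
      | add y z _ _ hy hz => simpa [add_sub_add_comm] using J.add_mem hy hz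
      | mul y z _ _ hy hz =>
        convert J.add_mem (J.mul_mem_left (algebraMap k A (φ y)) hz) (J.mul_mem_left z hy) using 1
        simp only [map_mul]
        ring
    simpa [RingHom.mem_ker.mp hx] using neg_mem (congr_mod_J x)
  · rintro _ ⟨x, -, rfl⟩
    simp [RingHom.mem_ker]

end PointsOfAlgebra

theorem Polynomial.mem_span_C_sub_X_iff {k : Type*} [CommRing k] {α : k} {p : k[X]} :
    p ∈ Ideal.span {C α - X} ↔ p.eval α = 0 := by
  rw [← neg_sub, Ideal.span_singleton_neg, ← ker_evalRingHom, RingHom.mem_ker, coe_evalRingHom]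

namespace Subalgebra

variable {k : Type*} [Field k] (R : Subalgebra k k[X])

noncomputable def evalAt (α : k) : R →ₐ[k] k := (aeval α).comp R.val

@[simp]
theorem evalAt_apply (α : k) (x : R) : R.evalAt α x = (x : k[X]).eval α := by
  simp [evalAt, coe_aeval_eq_eval]

theorem le_ker_evalAt_iff {α : k} {M : Ideal R} :
    M ≤ RingHom.ker (R.evalAt α) ↔ ∀ x ∈ M, (x : k[X]) ∈ Ideal.span {C α - X} := by
  simp only [SetLike.le_def, RingHom.mem_ker, evalAt_apply, mem_span_C_sub_X_iff]

end Subalgebra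

noncomputable def semigroupRing (k : Type*) [CommSemiring k] (H : AddSubmonoid ℕ) :
    Subalgebra k k[X] :=
  Algebra.adjoin k {p | ∃ h ∈ H, p = X ^ h}

section SemigroupRing

variable {k : Type*} [Field k] {H : AddSubmonoid ℕ}

theorem X_pow_mem_semigroupRing {h : ℕ} (hh : h ∈ H) : X ^ h ∈ semigroupRing k H :=
  Algebra.subset_adjoin ⟨h, hh, rfl⟩

theorem semigroupRing_closure (S : Set ℕ) :
    semigroupRing k (AddSubmonoid.closure S) = Algebra.adjoin k ((X ^ ·) '' S) := by
  refine le_antisymm (Algebra.adjoin_le ?_) (Algebra.adjoin_mono ?_)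
  · rintro _ ⟨h, hh, rfl⟩
    induction hh using AddSubmonoid.closure_induction with
    | mem n hn => exact Algebra.subset_adjoin ⟨n, hn, rfl⟩
    | zero => simp
    | add m n _ _ hm hn => simpa [pow_add] using Subalgebra.mul_mem _ hm hn
  · rintro _ ⟨n, hn, rfl⟩
    exact ⟨n, AddSubmonoid.subset_closure hn, rfl⟩

theorem adjoin_preimage_X_pow_eq_top :
    Algebra.adjoin k (((↑) : semigroupRing k H → k[X]) ⁻¹' {p | ∃ h ∈ H, p = X ^ h}) = ⊤ :=
  Subalgebra.adjoin_preimage_eq_top rfl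

theorem adjoin_preimage_X_pow_image_eq_top (S : Set ℕ) :
    Algebra.adjoin k (((↑) : semigroupRing k (AddSubmonoid.closure S) → k[X]) ⁻¹'
      ((X ^ ·) '' S)) = ⊤ :=
  Subalgebra.adjoin_preimage_eq_top (semigroupRing_closure S)

theorem exists_eq_evalAt {N : ℕ} (hN : N ∈ H) (hN1 : N + 1 ∈ H)
    (φ : semigroupRing k H →ₐ[k] k) : ∃ α, φ = (semigroupRing k H).evalAt α := by
  refine ⟨φ ⟨X ^ (N + 1), X_pow_mem_semigroupRing hN1⟩ / φ ⟨X ^ N, X_pow_mem_semigroupRing hN⟩,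
    AlgHom.ext_of_adjoin_eq_top adjoin_preimage_X_pow_eq_top ?_⟩
  intro x ⟨h, hh, hx⟩
  obtain rfl : x = ⟨X ^ h, X_pow_mem_semigroupRing hh⟩ := Subtype.ext hx
  rw [Subalgebra.evalAt_apply, eval_pow, eval_X]
  apply eq_div_pow_of_mul_pow_eq (N := N) <;>
  · simp only [← map_pow, ← map_mul]
    congr 1
    apply Subtype.ext
    simp only [MulMemClass.coe_mul, SubmonoidClass.coe_pow]
    ring

theorem evalAt_semigroupRing_injective {N : ℕ} (hN : N ∈ H) (hN1 : N + 1 ∈ H) :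
    Function.Injective (semigroupRing k H).evalAt := fun α β h ↦ by
  have pow_eq (n : ℕ) (hn : n ∈ H) : α ^ n = β ^ n := by
    simpa using congr($h ⟨X ^ n, X_pow_mem_semigroupRing hn⟩)
  rw [← pow_succ_div_pow_self α N, pow_eq N hN, pow_eq (N + 1) hN1, pow_succ_div_pow_self]

theorem ker_evalAt_semigroupRing_closure {ι : Type*} (a : ι → ℕ) (α : k) :
    RingHom.ker ((semigroupRing k (AddSubmonoid.closure (Set.range a))).evalAt α) =
      Ideal.span {x : semigroupRing k (AddSubmonoid.closure (Set.range a)) |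
        ∃ i, (x : k[X]) = C (α ^ a i) - X ^ a i} := by
  rw [AlgHom.ker_eq_span_of_adjoin_eq_top _ (adjoin_preimage_X_pow_image_eq_top (k := k) _)]
  congr 1
  ext x
  constructor
  · rintro ⟨y, ⟨_, ⟨i, rfl⟩, hy⟩, rfl⟩
    exact ⟨i, by simp [← hy, Polynomial.algebraMap_eq]⟩
  · rintro ⟨i, hx⟩
    refine ⟨algebraMap k _ (α ^ a i) - x, ⟨_, ⟨i, rfl⟩, by simp [hx, Polynomial.algebraMap_eq]⟩, ?_⟩
    apply Subtype.ext
    simp [hx, Polynomial.algebraMap_eq]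

end SemigroupRing

theorem rational_points_of_semigroup_ring_general
    (k : Type*) [Field k] (H : AddSubmonoid ℕ) (hfin : ((H : Set ℕ)ᶜ).Finite)
    (v : ℕ) (a : Fin v → ℕ) (ha : AddSubmonoid.closure (Set.range a) = H)
    (R : Subalgebra k (Polynomial k))
    (hRdef : R = Algebra.adjoin k {p : Polynomial k | ∃ h ∈ H, p = (X : Polynomial k) ^ h})
    (M : Ideal R) (hM : M.IsMaximal) :
    ((Function.Bijective (algebraMap k (R ⧸ M)) ↔
        ∃ α : k, M = Ideal.span {x : R | ∃ i : Fin v,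
          (x : Polynomial k) = C (α ^ (a i)) - X ^ (a i)}) ∧
      (Function.Bijective (algebraMap k (R ⧸ M)) ↔
        ∃ α : k, ∀ x ∈ M, (x : Polynomial k) ∈ Ideal.span {C α - (X : Polynomial k)})) ∧
      ∀ α β : k, (∀ x ∈ M, (x : Polynomial k) ∈ Ideal.span {C α - (X : Polynomial k)}) →
        (∀ x ∈ M, (x : Polynomial k) ∈ Ideal.span {C β - (X : Polynomial k)}) →
          α = β := by
  change R = semigroupRing k H at hRdef
  subst hRdef ha
  obtain ⟨N, hN, hN1⟩ := Set.exists_mem_and_add_one_mem_of_finite_compl hfin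
  have rational_iff : Function.Bijective (algebraMap k (semigroupRing k _ ⧸ M)) ↔
      ∃ α, M = RingHom.ker ((semigroupRing k _).evalAt α) := by
    rw [Ideal.bijective_algebraMap_quotient_iff]
    constructor
    · rintro ⟨φ, rfl⟩
      obtain ⟨α, rfl⟩ := exists_eq_evalAt hN hN1 φ
      exact ⟨α, rfl⟩
    · rintro ⟨α, rfl⟩
      exact ⟨_, rfl⟩
  have le_iff (α : k) : (∀ x ∈ M, (x : k[X]) ∈ Ideal.span {C α - X}) ↔
      M = RingHom.ker ((semigroupRing k _).evalAt α) := by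
    rw [← Subalgebra.le_ker_evalAt_iff]
    exact ⟨hM.eq_of_le (RingHom.ker_ne_top _), le_of_eq⟩
  refine ⟨⟨?_, ?_⟩, fun α β hα hβ ↦ ?_⟩
  · simp only [rational_iff, ker_evalAt_semigroupRing_closure]
  · simp only [rational_iff, le_iff]
  · rw [le_iff] at hα hβ
    exact evalAt_semigroupRing_injective hN hN1 (AlgHom.eq_of_ker_eq (hα.symm.trans hβ))

/-- for a numerical semigroup `H = ⟨a₁,…,a_v⟩` with `1 ∉ H` and
`R = k[H]`, a maximal ideal `M` of `R` is `k`-rational iff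
`M = (α^{aᵢ} − t^{aᵢ} : 1 ≤ i ≤ v)` for some `α ∈ k`, iff `M ⊆ (α − t)S` for some
`α ∈ k`; moreover such an `α` is unique. -/
theorem rational_points_of_semigroup_ring
    (k : Type*) [Field k] (H : AddSubmonoid ℕ) (hfin : ((H : Set ℕ)ᶜ).Finite)
    (h1 : (1 : ℕ) ∉ H)
    (v : ℕ) (a : Fin v → ℕ) (ha : AddSubmonoid.closure (Set.range a) = H)
    (R : Subalgebra k (Polynomial k))
    (hRdef : R = Algebra.adjoin k {p : Polynomial k | ∃ h ∈ H, p = (X : Polynomial k) ^ h})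
    (M : Ideal R) (hM : M.IsMaximal) :
    ((Function.Bijective (algebraMap k (R ⧸ M)) ↔
        ∃ α : k, M = Ideal.span {x : R | ∃ i : Fin v,
          (x : Polynomial k) = C (α ^ (a i)) - X ^ (a i)}) ∧
      (Function.Bijective (algebraMap k (R ⧸ M)) ↔
        ∃ α : k, ∀ x ∈ M, (x : Polynomial k) ∈ Ideal.span {C α - (X : Polynomial k)})) ∧
      ∀ α β : k, (∀ x ∈ M, (x : Polynomial k) ∈ Ideal.span {C α - (X : Polynomial k)}) →
        (∀ x ∈ M, (x : Polynomial k) ∈ Ideal.span {C β - (X : Polynomial k)}) →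
          α = β :=
  rational_points_of_semigroup_ring_general k H hfin v a ha R hRdef M hM
end

section
/- Let H be a numerical semigroup, k a field, and R = k[H] ⊆ k[t]. Let a, b ∈ H be positive with gcd(a,b) = 1. Then the ideal of R generated by { 1 − t^c : c ∈ H } equals the ideal generated by the two elements 1 − t^a and 1 − t^b. -/
open Polynomial

private lemma geom_key {S : Type*} [CommRing S] (x : S) (n : ℕ) :
    (1 - x) * ∑ i ∈ Finset.range n, x ^ i = 1 - x ^ n := by
  have h := geom_sum_mul x n
  linear_combination -h

/-- for a numerical semigroup `H`, `R = k[H]`, and positive `a, b ∈ H`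
with `gcd(a,b) = 1`, the ideal of `R` generated by `{1 − t^c : c ∈ H}` equals the
ideal generated by `1 − t^a` and `1 − t^b`. -/
theorem ideal_one_sub_pow_two_generated
    (k : Type*) [Field k] (H : AddSubmonoid ℕ) (hfin : ((H : Set ℕ)ᶜ).Finite)
    (R : Subalgebra k (Polynomial k))
    (hRdef : R = Algebra.adjoin k {p : Polynomial k | ∃ h ∈ H, p = (X : Polynomial k) ^ h})
    (a b : ℕ) (haH : a ∈ H) (hbH : b ∈ H) (ha : 0 < a) (hb : 0 < b)
    (hab : Nat.gcd a b = 1) :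
    Ideal.span {x : R | ∃ c ∈ H, (x : Polynomial k) = 1 - (X : Polynomial k) ^ c} =
      Ideal.span {x : R | (x : Polynomial k) = 1 - (X : Polynomial k) ^ a ∨
        (x : Polynomial k) = 1 - (X : Polynomial k) ^ b} := by
  subst hRdef
  set R : Subalgebra k (Polynomial k) :=
    Algebra.adjoin k {p : Polynomial k | ∃ h ∈ H, p = (X : Polynomial k) ^ h} with hR
  have hpow : ∀ h ∈ H, (X : Polynomial k) ^ h ∈ R := fun h hh =>
    Algebra.subset_adjoin ⟨h, hh, rfl⟩
  have hone : ∀ h ∈ H, (1 - (X : Polynomial k) ^ h) ∈ R := fun h hh =>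
    R.sub_mem R.one_mem (hpow h hh)
  apply le_antisymm
  · rw [Ideal.span_le]
    rintro x ⟨c, hcH, hx⟩
    -- find m with b ∣ c + a * m
    have hbz : NeZero b := ⟨hb.ne'⟩
    set aunit : (ZMod b)ˣ := ZMod.unitOfCoprime a hab with haunit
    set m : ℕ := ((-(c : ZMod b)) * (↑aunit⁻¹ : ZMod b)).val with hm
    have hdvd : b ∣ c + a * m := by
      rw [← ZMod.natCast_eq_zero_iff]
      push_cast
      rw [hm, ZMod.natCast_val, ZMod.cast_id]
      have hinv : (a : ZMod b) * (↑aunit⁻¹ : ZMod b) = 1 := by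
        rw [← ZMod.coe_unitOfCoprime a hab, ← haunit, ← Units.val_mul, mul_inv_cancel,
          Units.val_one]
      linear_combination (-(c : ZMod b)) * hinv
    set q : ℕ := (c + a * m) / b with hq
    have hbq : b * q = c + a * m := Nat.mul_div_cancel' hdvd
    -- elements of R
    have hGa : (∑ j ∈ Finset.range m, ((X : Polynomial k) ^ a) ^ j) ∈ R :=
      R.sum_mem fun j _ => R.pow_mem (hpow a haH) j
    have hGb : (∑ j ∈ Finset.range q, ((X : Polynomial k) ^ b) ^ j) ∈ R :=
      R.sum_mem fun j _ => R.pow_mem (hpow b hbH) j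
    have hxc : (X : Polynomial k) ^ c ∈ R := hpow c hcH
    rw [show {x : R | (x : Polynomial k) = 1 - (X : Polynomial k) ^ a ∨
        (x : Polynomial k) = 1 - (X : Polynomial k) ^ b} =
        {(⟨1 - X ^ a, hone a haH⟩ : R), (⟨1 - X ^ b, hone b hbH⟩ : R)} by
      ext y
      simp [Set.mem_setOf_eq, Subtype.ext_iff]]
    rw [SetLike.mem_coe, Ideal.mem_span_pair]
    refine ⟨⟨-((X : Polynomial k) ^ c * ∑ j ∈ Finset.range m, ((X : Polynomial k) ^ a) ^ j),
        R.neg_mem (R.mul_mem hxc hGa)⟩,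
      ⟨∑ j ∈ Finset.range q, ((X : Polynomial k) ^ b) ^ j, hGb⟩, ?_⟩
    apply Subtype.ext
    push_cast
    rw [hx]
    have h1 : (1 - (X : Polynomial k) ^ b) * ∑ j ∈ Finset.range q, ((X : Polynomial k) ^ b) ^ j
        = 1 - ((X : Polynomial k) ^ b) ^ q := geom_key _ _
    have h2 : (1 - (X : Polynomial k) ^ a) * ∑ j ∈ Finset.range m, ((X : Polynomial k) ^ a) ^ j
        = 1 - ((X : Polynomial k) ^ a) ^ m := geom_key _ _
    have h3 : ((X : Polynomial k) ^ b) ^ q = (X : Polynomial k) ^ c * ((X : Polynomial k) ^ a) ^ m := by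
      rw [← pow_mul, ← pow_mul, hbq, pow_add]
    linear_combination h1 - (X : Polynomial k) ^ c * h2 - h3
  · rw [Ideal.span_le]
    rintro x (hx | hx) <;> exact Ideal.subset_span (by
      first
      | exact ⟨a, haH, hx⟩
      | exact ⟨b, hbH, hx⟩)
end

section
/- Let H be a numerical semigroup, k a field, 0 ≠ α ∈ k, and R = k[H]. Then for all positive a, b ∈ H with gcd(a,b) = 1, the maximal ideal M_α = (α^{a_i} − t^{a_i} : 1 ≤ i ≤ v) of R (where a₁,...,a_v generate H) equals (α^a − t^a, α^b − t^b). -/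
/-!
Write `e n = α ^ n - t ^ n`. The exponents `n` with `e n ∈ I` form an additive monoid, because
`e (m + n) = α ^ m • e n + t ^ n * e m`. Run backwards with `α ≠ 0`, the same identity shows that
`e n ∈ I` as soon as `e N ∈ I` and `e (N + n) ∈ I` for one `N`. The monoid generated by coprime
`a` and `b` contains every large integer, so `e a, e b ∈ I` forces `e n ∈ I` for every `n` with
`t ^ n ∈ k[H]`; this gives both inclusions.
-/

open Polynomial

lemma C_pow_sub_X_pow_add {k : Type*} [CommRing k] (α : k) (m n : ℕ) :
    C (α ^ (m + n)) - (X : k[X]) ^ (m + n) =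
      C (α ^ m) * (C (α ^ n) - X ^ n) + X ^ n * (C (α ^ m) - X ^ m) := by
  rw [pow_add, C_mul, pow_add]; ring

namespace Subalgebra

variable {k : Type*} [CommRing k] {R : Subalgebra k k[X]}

lemma C_mem (R : Subalgebra k k[X]) (c : k) : C c ∈ R :=
  R.algebraMap_mem c

lemma X_pow_mem_of_coe_eq {α : k} {n : ℕ} {x : R} (hx : (x : k[X]) = C (α ^ n) - X ^ n) :
    (X : k[X]) ^ n ∈ R := by
  simpa [hx] using sub_mem (R.C_mem (α ^ n)) x.2

def diffPowExponents (α : k) (I : Ideal R) : AddSubmonoid ℕ where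
  carrier := {n | ∃ x ∈ I, (x : k[X]) = C (α ^ n) - X ^ n}
  zero_mem' := ⟨0, I.zero_mem, by simp⟩
  add_mem' := by
    rintro m n ⟨y, hyI, hy⟩ ⟨z, hzI, hz⟩
    refine ⟨⟨C (α ^ m), R.C_mem _⟩ * z + ⟨X ^ n, X_pow_mem_of_coe_eq hz⟩ * y,
      I.add_mem (I.mul_mem_left _ hzI) (I.mul_mem_left _ hyI), ?_⟩
    simp only [MulMemClass.coe_mul, AddMemClass.coe_add, hy, hz, C_pow_sub_X_pow_add]

variable {α : k} {I : Ideal R} {n : ℕ}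

lemma mem_diffPowExponents_iff :
    n ∈ diffPowExponents α I ↔
      (X : k[X]) ^ n ∈ R ∧ ∀ x : R, (x : k[X]) = C (α ^ n) - X ^ n → x ∈ I := by
  constructor
  · rintro ⟨y, hyI, hy⟩
    refine ⟨X_pow_mem_of_coe_eq hy, fun x hx => ?_⟩
    rwa [Subtype.ext (hx.trans hy.symm)]
  · rintro ⟨hXn, hI⟩
    exact ⟨_, hI ⟨C (α ^ n) - X ^ n, sub_mem (R.C_mem _) hXn⟩ rfl, rfl⟩

lemma mem_diffPowExponents_of_add_mem (hα : IsUnit α) {N : ℕ} (hXn : (X : k[X]) ^ n ∈ R)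
    (hN : N ∈ diffPowExponents α I) (hNn : N + n ∈ diffPowExponents α I) :
    n ∈ diffPowExponents α I := by
  obtain ⟨y, hyI, hy⟩ := hN
  obtain ⟨z, hzI, hz⟩ := hNn
  obtain ⟨β, hβ⟩ := (hα.pow N).exists_left_inv
  have hβC : C β * C (α ^ N) = (1 : k[X]) := by rw [← C_mul, hβ, C_1]
  refine ⟨⟨C β, R.C_mem _⟩ * (z - ⟨X ^ n, hXn⟩ * y),
    I.mul_mem_left _ (I.sub_mem hzI (I.mul_mem_left _ hyI)), ?_⟩
  simp only [MulMemClass.coe_mul, AddSubgroupClass.coe_sub, hy, hz, C_pow_sub_X_pow_add]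
  linear_combination (C (α ^ n) - X ^ n) * hβC

lemma mem_diffPowExponents_of_setGcd_eq_one (hα : IsUnit α)
    (hgcd : Nat.setGcd (diffPowExponents α I : Set ℕ) = 1) (hXn : (X : k[X]) ^ n ∈ R) :
    n ∈ diffPowExponents α I := by
  obtain ⟨N, hN⟩ := Nat.exists_mem_closure_of_ge (s := (diffPowExponents α I : Set ℕ))
  rw [AddSubmonoid.closure_eq, hgcd] at hN
  exact mem_diffPowExponents_of_add_mem hα hXn (hN N le_rfl (one_dvd N))
    (hN (N + n) (Nat.le_add_right N n) (one_dvd _))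

end Subalgebra

open Subalgebra

theorem rational_max_ideal_two_generated_general
    (k : Type*) [Field k] (H : AddSubmonoid ℕ)
    (v : ℕ) (aa : Fin v → ℕ) (haa : AddSubmonoid.closure (Set.range aa) = H)
    (R : Subalgebra k (Polynomial k))
    (hRdef : R = Algebra.adjoin k {p : Polynomial k | ∃ h ∈ H, p = (X : Polynomial k) ^ h})
    (α : k) (hα : α ≠ 0)
    (a b : ℕ) (haH : a ∈ H) (hbH : b ∈ H)
    (hab : Nat.gcd a b = 1) :
    Ideal.span {x : R | ∃ i : Fin v,
        (x : Polynomial k) = C (α ^ (aa i)) - X ^ (aa i)} =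
      Ideal.span {x : R | (x : Polynomial k) = C (α ^ a) - X ^ a ∨
        (x : Polynomial k) = C (α ^ b) - X ^ b} := by
  set I₁ := Ideal.span {x : R | ∃ i, (x : k[X]) = C (α ^ (aa i)) - X ^ (aa i)}
  set I₂ := Ideal.span {x : R | (x : k[X]) = C (α ^ a) - X ^ a ∨ (x : k[X]) = C (α ^ b) - X ^ b}
  have hXH {n : ℕ} (hn : n ∈ H) : (X : k[X]) ^ n ∈ R := hRdef ▸ Algebra.subset_adjoin ⟨n, hn, rfl⟩
  have haaH (i : Fin v) : aa i ∈ H := haa ▸ AddSubmonoid.subset_closure ⟨i, rfl⟩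
  have hH₁ : H ≤ diffPowExponents α I₁ := haa ▸ AddSubmonoid.closure_le.mpr <| by
    rintro _ ⟨i, rfl⟩
    exact mem_diffPowExponents_iff.mpr
      ⟨hXH (haaH i), fun x hx => Ideal.subset_span ⟨i, hx⟩⟩
  have hgcd₂ : Nat.setGcd (diffPowExponents α I₂ : Set ℕ) = 1 := by
    have mem {c : ℕ} (hcH : c ∈ H) (hc : ∀ x : R, (x : k[X]) = C (α ^ c) - X ^ c → x ∈ I₂) :=
      Nat.setGcd_dvd_of_mem (mem_diffPowExponents_iff.mpr ⟨hXH hcH, hc⟩)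
    exact Nat.dvd_one.mp <| hab ▸ Nat.dvd_gcd
      (mem haH fun x hx => Ideal.subset_span (Or.inl hx))
      (mem hbH fun x hx => Ideal.subset_span (Or.inr hx))
  apply le_antisymm <;> rw [Ideal.span_le]
  · rintro x ⟨i, hx⟩
    exact (mem_diffPowExponents_iff.mp
      (mem_diffPowExponents_of_setGcd_eq_one hα.isUnit hgcd₂ (hXH (haaH i)))).2 x hx
  · rintro x (hx | hx)
    · exact (mem_diffPowExponents_iff.mp (hH₁ haH)).2 x hx
    · exact (mem_diffPowExponents_iff.mp (hH₁ hbH)).2 x hx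

/-- for a numerical semigroup `H = ⟨a₁,…,a_v⟩`, `R = k[H]`, `0 ≠ α ∈ k`,
and positive `a, b ∈ H` with `gcd(a,b) = 1`, the maximal ideal
`M_α = (α^{aᵢ} − t^{aᵢ} : 1 ≤ i ≤ v)` equals `(α^a − t^a, α^b − t^b)`. -/
theorem rational_max_ideal_two_generated
    (k : Type*) [Field k] (H : AddSubmonoid ℕ) (hfin : ((H : Set ℕ)ᶜ).Finite)
    (v : ℕ) (aa : Fin v → ℕ) (haa : AddSubmonoid.closure (Set.range aa) = H)
    (R : Subalgebra k (Polynomial k))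
    (hRdef : R = Algebra.adjoin k {p : Polynomial k | ∃ h ∈ H, p = (X : Polynomial k) ^ h})
    (α : k) (hα : α ≠ 0)
    (a b : ℕ) (haH : a ∈ H) (hbH : b ∈ H) (ha : 0 < a) (hb : 0 < b)
    (hab : Nat.gcd a b = 1) :
    Ideal.span {x : R | ∃ i : Fin v,
        (x : Polynomial k) = C (α ^ (aa i)) - X ^ (aa i)} =
      Ideal.span {x : R | (x : Polynomial k) = C (α ^ a) - X ^ a ∨
        (x : Polynomial k) = C (α ^ b) - X ^ b} :=
  rational_max_ideal_two_generated_general k H v aa haa R hRdef α hα a b haH hbH hab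
end

section
/- Let k be an algebraically closed field, H a numerical semigroup with 1 ∉ H, and R = k[H]. For a maximal ideal M of R: if M ≠ P₀ := (t^{a_i} : generators of H), then μ_R(M) = 2; and μ_R(P₀) = μ(H), the minimal number of generators of the numerical semigroup H. -/
open Polynomial

/-- Minimal number of generators of an additive submonoid of `ℕ`. -/
noncomputable def muSemigroup (H : AddSubmonoid ℕ) : ℕ :=
  sInf {n | ∃ s : Finset ℕ, s.card = n ∧ AddSubmonoid.closure (s : Set ℕ) = H}

/-!
Since `H` has finite complement, `t ^ N k[t] ⊆ R` for large `N`, so `k[t]` is integral over `R`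
and every maximal ideal of `R` is the contraction of `(t - c)` for some `c ∈ k`.

For `c ≠ 0` the ideal is generated by `F = t ^ N - c ^ N` and `G = t ^ (N + 1) - c ^ (N + 1)`,
because `G - t F = c ^ N (t - c)` and `t ^ N k[t] ⊆ R`. It is not principal: a generator would
divide `F` and `G`, hence be associated to `t - c`, whose coefficient of `t` is nonzero although
`1 ∉ H`.

For `c = 0`, `P₀` is generated by the `t ^ g` with `g` running over the minimal generators `G`
of `H`. Conversely, reading off the coefficients at `G` is a `k`-linear map `θ : R → k ^ G` with
`θ (r x) = r(0) θ x` for `x ∈ P₀`. Hence for any generating set `s` of `P₀` the span of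
`θ '' s` contains the standard basis of `k ^ G`, and `s` has at least `|G| = μ(H)` elements.
-/

section MinimalNumberOfGenerators

variable {A : Type*} [CommRing A] {I : Ideal A}

theorem muIdeal_le_ncard {t : Set A} (ht : t.Finite) (hI : Ideal.span t = I) :
    muIdeal I ≤ t.ncard :=
  Nat.sInf_le ⟨ht.toFinset, (Set.ncard_eq_toFinset_card t ht).symm, by simpa using hI⟩

theorem le_muIdeal {n : ℕ} (hI : I.FG) (h : ∀ s : Finset A, Ideal.span s = I → n ≤ s.card) :
    n ≤ muIdeal I := by
  obtain ⟨s, hs⟩ := hI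
  exact le_csInf ⟨_, s, rfl, hs⟩ fun _ ⟨s, hcard, hs⟩ ↦ hcard ▸ h s hs

theorem muIdeal_eq_two {a b : A} (hI : Ideal.span {a, b} = I) (hI' : ¬ I.IsPrincipal) :
    muIdeal I = 2 := by
  refine le_antisymm ((muIdeal_le_ncard (by simp) hI).trans ?_) (le_muIdeal ?_ fun s hs ↦ ?_)
  · exact (Set.ncard_insert_le a {b}).trans (by simp)
  · classical exact ⟨{a, b}, by simpa using hI⟩
  · by_contra! hcard
    obtain ⟨x, hx⟩ := Finset.card_le_one_iff_subset_singleton.mp (Nat.le_of_lt_succ hcard)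
    rcases Finset.subset_singleton_iff.mp hx with rfl | rfl
    · exact hI' (hs ▸ by simpa using bot_isPrincipal)
    · exact hI' (hs ▸ by simpa using ⟨x, rfl⟩)

end MinimalNumberOfGenerators

section MinimalGenerators

variable {H : AddSubmonoid ℕ}

variable (H) in
def minimalGenerators : Set ℕ :=
  {g | g ∈ H ∧ g ≠ 0 ∧ ∀ a ∈ H, ∀ b ∈ H, a + b = g → a = 0 ∨ b = 0}

theorem exists_pos_forall_le_mem (hH : ((H : Set ℕ)ᶜ).Finite) :
    ∃ N, 0 < N ∧ ∀ n, N ≤ n → n ∈ H := by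
  obtain ⟨B, hB⟩ := hH.bddAbove
  exact ⟨B + 1, B.succ_pos, fun n hn ↦ by by_contra h; exact absurd (hB h) (by omega)⟩

theorem exists_mem_minimalGenerators_add_eq {i : ℕ} (hi : i ∈ H) (hi0 : i ≠ 0) :
    ∃ g ∈ minimalGenerators H, ∃ r ∈ H, g + r = i := by
  induction i using Nat.strong_induction_on with
  | _ i ih =>
    by_cases hg : ∀ a ∈ H, ∀ b ∈ H, a + b = i → a = 0 ∨ b = 0
    · exact ⟨i, ⟨hi, hi0, hg⟩, 0, zero_mem H, add_zero i⟩
    · push Not at hg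
      obtain ⟨a, ha, b, hb, rfl, ha0, hb0⟩ := hg
      obtain ⟨g, hg, r, hr, rfl⟩ := ih a (by omega) ha ha0
      exact ⟨g, hg, r + b, add_mem hr hb, (add_assoc g r b).symm⟩

variable (H) in
theorem closure_minimalGenerators : AddSubmonoid.closure (minimalGenerators H) = H := by
  refine le_antisymm (AddSubmonoid.closure_le.mpr fun g hg ↦ hg.1) fun i hi ↦ ?_
  induction i using Nat.strong_induction_on with
  | _ i ih =>
    rcases eq_or_ne i 0 with rfl | hi0
    · exact zero_mem _
    obtain ⟨g, hg, r, hr, rfl⟩ := exists_mem_minimalGenerators_add_eq hi hi0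
    exact add_mem (AddSubmonoid.subset_closure hg) (ih r (by have := hg.2.1; omega) hr)

/-- Removing a minimal generator from `H` leaves a submonoid, so every generating set
contains it. -/
theorem minimalGenerators_subset {s : Set ℕ} (hs : AddSubmonoid.closure s = H) :
    minimalGenerators H ⊆ s := by
  rintro g ⟨hgH, hg0, hg⟩
  by_contra hgs
  let H' : AddSubmonoid ℕ :=
    { carrier := {n | n ∈ H ∧ n ≠ g}
      zero_mem' := ⟨zero_mem H, hg0.symm⟩
      add_mem' := fun {a b} ⟨ha, hag⟩ ⟨hb, hbg⟩ ↦ ⟨add_mem ha hb, fun hab ↦ by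
        rcases hg a ha b hb hab with rfl | rfl <;> simp_all⟩ }
  have hHH' : H ≤ H' := hs ▸ AddSubmonoid.closure_le.mpr fun n hn ↦
    ⟨hs ▸ AddSubmonoid.subset_closure hn, fun h ↦ hgs (h ▸ hn)⟩
  exact (hHH' hgH).2 rfl

theorem minimalGenerators_finite (hH : ((H : Set ℕ)ᶜ).Finite) :
    (minimalGenerators H).Finite := by
  obtain ⟨N, hN0, hN⟩ := exists_pos_forall_le_mem hH
  refine (Set.finite_Iio (2 * N)).subset fun g ⟨_, _, hg⟩ ↦ Set.mem_Iio.mpr ?_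
  by_contra! hgN
  have := hg N (hN N le_rfl) (g - N) (hN _ (by omega)) (by omega)
  omega

theorem muSemigroup_eq_ncard_minimalGenerators (hH : ((H : Set ℕ)ᶜ).Finite) :
    muSemigroup H = (minimalGenerators H).ncard := by
  have hG := minimalGenerators_finite hH
  have hclosure : AddSubmonoid.closure (hG.toFinset : Set ℕ) = H := by
    simpa using closure_minimalGenerators H
  refine le_antisymm
    (Nat.sInf_le ⟨hG.toFinset, (Set.ncard_eq_toFinset_card _ hG).symm, hclosure⟩)
    (le_csInf ⟨_, hG.toFinset, rfl, hclosure⟩ ?_)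
  rintro _ ⟨s, rfl, hs⟩
  simpa using Set.ncard_le_ncard (minimalGenerators_subset hs) s.finite_toSet

end MinimalGenerators

section SemigroupAlgebra

variable (k : Type*) [CommSemiring k] (H : AddSubmonoid ℕ)

/-- The semigroup ring `k[H]`, as a subalgebra of `k[t]`. -/
def semigroupAlgebra : Subalgebra k k[X] where
  carrier := {p | ∀ n, p.coeff n ≠ 0 → n ∈ H}
  mul_mem' {p q} hp hq n hn := by
    obtain ⟨⟨i, j⟩, hij, hne⟩ :=
      Finset.exists_ne_zero_of_sum_ne_zero (coeff_mul p q n ▸ hn)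
    rw [← Finset.HasAntidiagonal.mem_antidiagonal.mp hij]
    exact add_mem (hp i (left_ne_zero_of_mul hne)) (hq j (right_ne_zero_of_mul hne))
  add_mem' {p q} hp hq n hn := by
    by_cases hpn : p.coeff n = 0
    · exact hq n (by simpa [hpn] using hn)
    · exact hp n hpn
  algebraMap_mem' a n hn := by
    obtain rfl : n = 0 := by by_contra h; simp [coeff_C, h] at hn
    exact zero_mem H

variable {k H}

theorem monomial_mem_semigroupAlgebra {n : ℕ} (hn : n ∈ H) (a : k) :
    monomial n a ∈ semigroupAlgebra k H := fun m hm ↦ by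
  obtain rfl : m = n := by by_contra h; simp [coeff_monomial, Ne.symm h] at hm
  exact hn

theorem C_mem_semigroupAlgebra (a : k) : C a ∈ semigroupAlgebra k H :=
  Subalgebra.algebraMap_mem _ a

theorem X_pow_mem_semigroupAlgebra {n : ℕ} (hn : n ∈ H) :
    (X ^ n : k[X]) ∈ semigroupAlgebra k H := by
  rw [X_pow_eq_monomial]
  exact monomial_mem_semigroupAlgebra hn 1

theorem X_pow_mul_mem_semigroupAlgebra {N : ℕ} (hN : ∀ n, N ≤ n → n ∈ H) (p : k[X]) :
    X ^ N * p ∈ semigroupAlgebra k H := fun n hn ↦ by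
  rw [coeff_X_pow_mul'] at hn
  exact hN n (by by_contra h; simp [h] at hn)

theorem adjoin_X_pow_eq_semigroupAlgebra :
    Algebra.adjoin k {p : k[X] | ∃ h ∈ H, p = X ^ h} = semigroupAlgebra k H := by
  refine le_antisymm (Algebra.adjoin_le ?_) fun p hp ↦ ?_
  · rintro _ ⟨h, hh, rfl⟩
    exact X_pow_mem_semigroupAlgebra hh
  · rw [p.as_sum_support_C_mul_X_pow]
    refine sum_mem fun n hn ↦ Subalgebra.mul_mem _ (Subalgebra.algebraMap_mem _ _) ?_
    exact Algebra.subset_adjoin ⟨n, hp n (mem_support_iff.mp hn), rfl⟩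

theorem coeff_mul_of_mem_minimalGenerators {p q : k[X]} (hp : p ∈ semigroupAlgebra k H)
    (hq : q ∈ semigroupAlgebra k H) (hq0 : q.coeff 0 = 0) {g : ℕ}
    (hg : g ∈ minimalGenerators H) :
    (p * q).coeff g = p.coeff 0 * q.coeff g := by
  rw [coeff_mul, Finset.sum_eq_single_of_mem (0, g) (by simp)]
  rintro ⟨i, j⟩ hij hne
  rw [Finset.HasAntidiagonal.mem_antidiagonal] at hij
  by_contra h
  rcases hg.2.2 i (hp i (left_ne_zero_of_mul h)) j (hq j (right_ne_zero_of_mul h)) hij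
    with rfl | rfl <;> simp_all

end SemigroupAlgebra

section MaximalIdeals

variable {k : Type*} [Field k]

theorem isIntegral_of_X_pow_mem {R : Subalgebra k k[X]} {a : ℕ} (ha : 0 < a)
    (hXa : X ^ a ∈ R) : Algebra.IsIntegral R k[X] := by
  have hX : IsIntegral R (X : k[X]) :=
    IsIntegral.of_pow ha (isIntegral_algebraMap (x := (⟨_, hXa⟩ : R)))
  have htop : ⊤ ≤ (integralClosure R k[X]).restrictScalars k :=
    adjoin_X (R := k) ▸ Algebra.adjoin_le (Set.singleton_subset_iff.mpr hX)
  exact ⟨fun p ↦ htop Algebra.mem_top⟩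

theorem exists_eq_span_X_sub_C_of_isMaximal [IsAlgClosed k] {Q : Ideal k[X]} (hQ : Q.IsMaximal) :
    ∃ c, Q = Ideal.span {X - C c} := by
  obtain ⟨q, rfl⟩ := Submodule.IsPrincipal.principal Q
  have hq0 : q ≠ 0 := by
    rintro rfl
    exact Ring.ne_bot_of_isMaximal_of_not_isField hQ (Polynomial.not_isField k) (by simp)
  have hq := Ideal.irreducible_of_isMaximal_span_singleton hq0 hQ
  obtain ⟨c, hc⟩ := IsAlgClosed.exists_root q (degree_pos_of_irreducible hq).ne'
  exact ⟨c, Ideal.span_singleton_eq_span_singleton.mpr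
    ((irreducible_X_sub_C c).associated_of_dvd hq (dvd_iff_isRoot.mpr hc)).symm⟩

theorem exists_eq_comap_span_X_sub_C [IsAlgClosed k] {R : Subalgebra k k[X]}
    [Algebra.IsIntegral R k[X]] (M : Ideal R) [M.IsMaximal] :
    ∃ c, M = (Ideal.span {X - C c}).comap (algebraMap R k[X]) := by
  obtain ⟨Q, hQ, hMQ⟩ := Ideal.exists_maximal_ideal_liesOver_of_isIntegral (S := k[X]) M
  obtain ⟨c, rfl⟩ := exists_eq_span_X_sub_C_of_isMaximal hQ
  exact ⟨c, hMQ.over⟩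

end MaximalIdeals

section PointIdeals

variable {k : Type*} [Field k] {H : AddSubmonoid ℕ} {N : ℕ} {c : k}

theorem mem_comap_span_X_sub_C {R : Subalgebra k k[X]} {x : R} :
    x ∈ (Ideal.span {X - C c}).comap (algebraMap R k[X]) ↔ X - C c ∣ (x : k[X]) := by
  simp [Ideal.mem_span_singleton]

theorem not_associated_X_sub_C (h1 : 1 ∉ H) {u : k[X]} (hu : u ∈ semigroupAlgebra k H) :
    ¬Associated u (X - C c) := by
  rintro ⟨v, hv⟩
  obtain ⟨b, -, hb⟩ := Polynomial.isUnit_iff.mp v.isUnit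
  have hu1 : u.coeff 1 = 0 := by
    by_contra h
    exact h1 (hu 1 h)
  simpa [← hb, hu1] using congrArg (coeff · 1) hv

theorem comap_span_X_sub_C_eq_span_pair (hN : ∀ n, N ≤ n → n ∈ H) (hc : c ≠ 0)
    {F G : semigroupAlgebra k H} (hF : (F : k[X]) = X ^ N - C c ^ N)
    (hG : (G : k[X]) = X ^ (N + 1) - C c ^ (N + 1)) :
    (Ideal.span {X - C c}).comap (algebraMap (semigroupAlgebra k H) k[X]) =
      Ideal.span {F, G} := by
  refine le_antisymm (fun x hx ↦ ?_) (Ideal.span_le.mpr ?_)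
  · obtain ⟨y, hy⟩ := mem_comap_span_X_sub_C.mp hx
    let Xy : semigroupAlgebra k H := ⟨X ^ N * y, X_pow_mul_mem_semigroupAlgebra hN y⟩
    let XXy : semigroupAlgebra k H := ⟨X ^ N * (X * y), X_pow_mul_mem_semigroupAlgebra hN _⟩
    have hcc : C c⁻¹ ^ N * C c ^ N = 1 := by
      rw [← mul_pow, ← map_mul, inv_mul_cancel₀ hc, map_one, one_pow]
    -- `x = c⁻ᴺ (Xᴺ - F) x` and `Xᴺ x = c⁻ᴺ Xᴺ y (G - X F)`
    refine Ideal.mem_span_pair.mpr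
      ⟨-((c⁻¹ ^ N) ^ 2 • XXy + c⁻¹ ^ N • x), (c⁻¹ ^ N) ^ 2 • Xy, ?_⟩
    apply Subtype.ext
    simp only [Subalgebra.coe_add, Subalgebra.coe_mul, Subalgebra.coe_neg, Subalgebra.coe_smul,
      smul_eq_C_mul, hF, hG, Xy, XXy, map_pow]
    rw [hy]
    linear_combination (C c⁻¹ ^ N * X ^ N * (X - C c) * y + (X - C c) * y) * hcc
  · rintro _ (rfl | rfl)
    · exact mem_comap_span_X_sub_C.mpr (hF ▸ sub_dvd_pow_sub_pow X (C c) N)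
    · exact mem_comap_span_X_sub_C.mpr (hG ▸ sub_dvd_pow_sub_pow X (C c) (N + 1))

theorem muIdeal_comap_span_X_sub_C_eq_two (h1 : 1 ∉ H) (hN : ∀ n, N ≤ n → n ∈ H)
    (hc : c ≠ 0) :
    muIdeal ((Ideal.span {X - C c}).comap (algebraMap (semigroupAlgebra k H) k[X])) = 2 := by
  have hXN (n : ℕ) (hn : N ≤ n) : X ^ n - C c ^ n ∈ semigroupAlgebra k H :=
    sub_mem (X_pow_mem_semigroupAlgebra (hN n hn)) (pow_mem (C_mem_semigroupAlgebra c) n)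
  let F : semigroupAlgebra k H := ⟨_, hXN N le_rfl⟩
  let G : semigroupAlgebra k H := ⟨_, hXN (N + 1) N.le_succ⟩
  have hspan := comap_span_X_sub_C_eq_span_pair hN hc (F := F) (G := G) rfl rfl
  refine muIdeal_eq_two hspan.symm ?_
  rintro ⟨u, hu⟩
  rw [hspan] at hu
  have hdvd {x} (hx : x ∈ Ideal.span {F, G}) : (u : k[X]) ∣ (x : k[X]) := by
    rw [hu, Ideal.submodule_span_eq, Ideal.mem_span_singleton] at hx
    exact map_dvd (algebraMap _ k[X]) hx
  have hFG : (u : k[X]) ∣ (G : k[X]) - X * (F : k[X]) :=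
    dvd_sub (hdvd (Ideal.subset_span (by simp)))
      (dvd_mul_of_dvd_right (hdvd (Ideal.subset_span (by simp))) X)
  have hGXF : (G : k[X]) - X * (F : k[X]) = C c ^ N * (X - C c) := by
    simp only [F, G]
    ring
  rw [hGXF, (isUnit_C.mpr hc.isUnit).pow N |>.dvd_mul_left] at hFG
  exact not_associated_X_sub_C h1 u.2 (associated_of_dvd_dvd hFG
    (mem_comap_span_X_sub_C.mp (hspan ▸ hu ▸ Ideal.mem_span_singleton_self u)))

end PointIdeals

section OriginIdeal

variable {k : Type*} [Field k] {H : AddSubmonoid ℕ}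

theorem mem_comap_span_X {R : Subalgebra k k[X]} {x : R} :
    x ∈ (Ideal.span {X}).comap (algebraMap R k[X]) ↔ (x : k[X]).coeff 0 = 0 := by
  simp [Ideal.mem_span_singleton, X_dvd_iff]

theorem comap_span_X_eq_span_X_pow_minimalGenerators :
    (Ideal.span {X}).comap (algebraMap (semigroupAlgebra k H) k[X]) =
      Ideal.span (Subtype.val ⁻¹' ((X ^ ·) '' minimalGenerators H)) := by
  refine le_antisymm (fun x hx ↦ ?_) (Ideal.span_le.mpr ?_)
  · let V : Submodule k k[X] :=
      ((Ideal.span (Subtype.val ⁻¹' ((X ^ ·) '' minimalGenerators H))).restrictScalars k).map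
        (semigroupAlgebra k H).val.toLinearMap
    suffices (x : k[X]) ∈ V by
      obtain ⟨y, hy, hyx⟩ := this
      rwa [← Subtype.ext hyx]
    rw [(x : k[X]).as_sum_support]
    refine Submodule.sum_mem V fun n hn ↦ ?_
    have hn0 : n ≠ 0 := by
      rintro rfl
      exact mem_support_iff.mp hn (mem_comap_span_X.mp hx)
    obtain ⟨g, hg, r, hr, rfl⟩ :=
      exists_mem_minimalGenerators_add_eq (x.2 n (mem_support_iff.mp hn)) hn0
    refine ⟨⟨_, monomial_mem_semigroupAlgebra hr ((x : k[X]).coeff (g + r))⟩ *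
      ⟨_, X_pow_mem_semigroupAlgebra hg.1⟩,
      Ideal.mul_mem_left _ _ (Ideal.subset_span ⟨g, hg, rfl⟩), ?_⟩
    simp [X_pow_eq_monomial, monomial_mul_monomial, add_comm]
  · rintro x ⟨g, hg, hx⟩
    exact mem_comap_span_X.mpr (by simp [← hx, coeff_X_pow, hg.2.1.symm])

theorem ncard_minimalGenerators_le_card {s : Finset (semigroupAlgebra k H)}
    (hs : Ideal.span s = (Ideal.span {X}).comap (algebraMap (semigroupAlgebra k H) k[X])) :
    (minimalGenerators H).ncard ≤ s.card := by
  classical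
  let θ : semigroupAlgebra k H →ₗ[k] (minimalGenerators H → k) :=
    LinearMap.pi fun g ↦ (lcoeff k g).comp (semigroupAlgebra k H).val.toLinearMap
  let V := Submodule.span k ((s.image θ : Finset _) : Set (minimalGenerators H → k))
  have hθ {x} (hx : x ∈ Ideal.span s) : θ x ∈ V := by
    induction hx using Submodule.span_induction with
    | mem x hx =>
      exact Submodule.subset_span (Finset.mem_coe.mpr (Finset.mem_image_of_mem θ hx))
    | zero => simp
    | add x y _ _ hx hy => simpa using add_mem hx hy
    | smul r x hxs hx =>
      convert Submodule.smul_mem _ ((r : k[X]).coeff 0) hx using 1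
      funext g
      exact coeff_mul_of_mem_minimalGenerators r.2 x.2 (mem_comap_span_X.mp (hs ▸ hxs)) g.2
  have hsingle (g : minimalGenerators H) : Pi.single g 1 ∈ V := by
    let Xg : semigroupAlgebra k H := ⟨X ^ (g : ℕ), X_pow_mem_semigroupAlgebra g.2.1⟩
    have hXg : Xg ∈ Ideal.span s :=
      hs ▸ mem_comap_span_X.mpr (by simp [Xg, coeff_X_pow, g.2.2.1.symm])
    have hθXg : θ Xg = Pi.single g 1 := by
      funext g'
      simp only [θ, Xg, LinearMap.pi_apply, LinearMap.comp_apply, lcoeff_apply,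
        AlgHom.toLinearMap_apply, Subalgebra.coe_val, coeff_X_pow, Pi.single_apply, Subtype.ext_iff]
    exact hθXg ▸ hθ hXg
  have hcard := linearIndependent_le_span' _
    (Pi.linearIndependent_single_one (minimalGenerators H) k) _ (Set.range_subset_iff.mpr hsingle)
  rw [← Nat.card_coe_set_eq]
  exact (Cardinal.toNat_le_toNat hcard Cardinal.natCast_lt_aleph0).trans
    (by simpa using Finset.card_image_le)

theorem muIdeal_comap_span_X_eq_ncard_minimalGenerators (hH : ((H : Set ℕ)ᶜ).Finite) :
    muIdeal ((Ideal.span {X}).comap (algebraMap (semigroupAlgebra k H) k[X])) =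
      (minimalGenerators H).ncard := by
  have hfin : (Subtype.val ⁻¹' ((X ^ ·) '' minimalGenerators H) :
      Set (semigroupAlgebra k H)).Finite :=
    ((minimalGenerators_finite hH).image _).preimage Subtype.val_injective.injOn
  have hspan := (comap_span_X_eq_span_X_pow_minimalGenerators (k := k) (H := H)).symm
  refine le_antisymm ((muIdeal_le_ncard hfin hspan).trans_eq ?_)
    (le_muIdeal (Submodule.fg_def.mpr ⟨_, hfin, hspan⟩) fun _ ↦
      ncard_minimalGenerators_le_card)
  rw [Set.ncard_preimage_of_injective_subset_range Subtype.val_injective,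
    Set.ncard_image_of_injective]
  · exact fun m n h ↦ by simpa using congrArg natDegree h
  · rintro _ ⟨g, hg, rfl⟩
    exact ⟨⟨_, X_pow_mem_semigroupAlgebra hg.1⟩, rfl⟩

end OriginIdeal

/-- for `k` algebraically closed, a numerical semigroup `H` with
`1 ∉ H`, and `R = k[H]`: every maximal ideal `M ≠ P₀ = tk[t] ∩ R` satisfies
`μ_R(M) = 2`, and `μ_R(P₀) = μ(H)`. -/
theorem mu_of_maximal_ideal_semigroup_ring
    (k : Type*) [Field k] [IsAlgClosed k]
    (H : AddSubmonoid ℕ) (hfin : ((H : Set ℕ)ᶜ).Finite) (h1 : (1 : ℕ) ∉ H)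
    (R : Subalgebra k (Polynomial k))
    (hRdef : R = Algebra.adjoin k {p : Polynomial k | ∃ h ∈ H, p = (X : Polynomial k) ^ h})
    (P₀ : Ideal R)
    (hP₀ : P₀ = (Ideal.span {(X : Polynomial k)}).comap (algebraMap R (Polynomial k)))
    (M : Ideal R) (hM : M.IsMaximal) :
    (M ≠ P₀ → muIdeal M = 2) ∧ (M = P₀ → muIdeal M = muSemigroup H) := by
  obtain ⟨N, hN0, hN⟩ := exists_pos_forall_le_mem hfin
  obtain rfl : R = semigroupAlgebra k H := hRdef.trans adjoin_X_pow_eq_semigroupAlgebra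
  subst hP₀
  have := isIntegral_of_X_pow_mem hN0 (X_pow_mem_semigroupAlgebra (k := k) (hN N le_rfl))
  obtain ⟨c, rfl⟩ := exists_eq_comap_span_X_sub_C M
  refine ⟨fun hne ↦ ?_, fun heq ↦ ?_⟩
  · have hc : c ≠ 0 := by
      rintro rfl
      simp at hne
    exact muIdeal_comap_span_X_sub_C_eq_two h1 hN hc
  · rw [heq, muSemigroup_eq_ncard_minimalGenerators hfin]
    exact muIdeal_comap_span_X_eq_ncard_minimalGenerators hfin
end

section
/- Let H be a numerical semigroup with 1 ∉ H, R = k[H], and q ∈ H with q > 0. Then the ideal 𝔞 = t^q k[t] ∩ R of R is not principal; that is, μ_R(𝔞) ≥ 2. -/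
open Polynomial

lemma support_mem_H {k : Type*} [Field k] (H : AddSubmonoid ℕ)
    {p : Polynomial k}
    (hp : p ∈ Algebra.adjoin k {p : Polynomial k | ∃ h ∈ H, p = (X : Polynomial k) ^ h}) :
    ∀ n ∈ p.support, n ∈ H := by
  induction hp using Algebra.adjoin_induction with
  | mem p hp =>
    obtain ⟨h, hh, rfl⟩ := hp
    intro n hn
    simp only [Polynomial.mem_support_iff, Polynomial.coeff_X_pow] at hn
    by_cases hnh : n = h
    · exact hnh ▸ hh
    · simp [hnh] at hn
  | algebraMap c =>
    intro n hn
    simp only [Polynomial.algebraMap_eq] at hn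
    have := Polynomial.mem_support_iff.mp hn
    rw [Polynomial.coeff_C] at this
    by_cases h0 : n = 0
    · exact h0 ▸ H.zero_mem
    · simp [h0] at this
  | add p q hp hq ih1 ih2 =>
    intro n hn
    rcases Finset.mem_union.mp (Polynomial.support_add hn) with h | h
    · exact ih1 n h
    · exact ih2 n h
  | mul p q hp hq ih1 ih2 =>
    intro n hn
    have hc : (p * q).coeff n ≠ 0 := Polynomial.mem_support_iff.mp hn
    rw [Polynomial.coeff_mul] at hc
    obtain ⟨⟨i, j⟩, hij, hne⟩ := Finset.exists_ne_zero_of_sum_ne_zero hc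
    have hin : i + j = n := Finset.HasAntidiagonal.mem_antidiagonal.mp hij
    have hi : i ∈ p.support := Polynomial.mem_support_iff.mpr (fun h => hne (by simp [h]))
    have hj : j ∈ q.support := Polynomial.mem_support_iff.mpr (fun h => hne (by simp [h]))
    exact hin ▸ H.add_mem (ih1 i hi) (ih2 j hj)

/-- for a numerical semigroup `H` with `1 ∉ H`, `R = k[H]`, and
`0 < q ∈ H`, the ideal `𝔞 = t^q k[t] ∩ R` of `R` is not principal, i.e. `μ_R(𝔞) ≥ 2`. -/
theorem contraction_of_pow_not_principal
    (k : Type*) [Field k] (H : AddSubmonoid ℕ) (hfin : ((H : Set ℕ)ᶜ).Finite)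
    (h1 : (1 : ℕ) ∉ H)
    (R : Subalgebra k (Polynomial k))
    (hRdef : R = Algebra.adjoin k {p : Polynomial k | ∃ h ∈ H, p = (X : Polynomial k) ^ h})
    (q : ℕ) (hqH : q ∈ H) (hq : 0 < q) :
    ¬ ((Ideal.span {(X : Polynomial k) ^ q}).comap
        (algebraMap R (Polynomial k))).IsPrincipal ∧
      2 ≤ muIdeal ((Ideal.span {(X : Polynomial k) ^ q}).comap
        (algebraMap R (Polynomial k))) := by
  -- basic setup
  set A : Ideal R := (Ideal.span {(X : Polynomial k) ^ q}).comap (algebraMap R (Polynomial k))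
    with hA
  have hmemA : ∀ x : R, x ∈ A ↔ (X : Polynomial k) ^ q ∣ (x : Polynomial k) := by
    intro x
    rw [hA, Ideal.mem_comap, Ideal.mem_span_singleton]
    rfl
  have hXmem : ∀ h : ℕ, h ∈ H → (X : Polynomial k) ^ h ∈ R := by
    intro h hh
    rw [hRdef]
    exact Algebra.subset_adjoin ⟨h, hh, rfl⟩
  have hsupp : ∀ x : R, ∀ n ∈ (x : Polynomial k).support, n ∈ H := by
    intro x
    exact support_mem_H H (hRdef ▸ x.2)
  -- the largest gap g
  have h1G : (1 : ℕ) ∈ hfin.toFinset := by simpa using h1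
  set g : ℕ := hfin.toFinset.max' ⟨1, h1G⟩ with hgdef
  have hgH : g ∉ H := by
    have := hfin.toFinset.max'_mem ⟨1, h1G⟩
    simpa using this
  have hgmax : ∀ m, g < m → m ∈ H := by
    intro m hm
    by_contra hmH
    have : m ∈ hfin.toFinset := by simpa using hmH
    exact absurd (hfin.toFinset.le_max' m this) (not_le.mpr hm)
  have hqgH : q + g ∈ H := hgmax _ (by omega)
  -- elements X^q and X^(q+g) of A
  have hXq : (⟨(X : Polynomial k) ^ q, hXmem q hqH⟩ : R) ∈ A :=
    (hmemA _).mpr dvd_rfl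
  have hXqg : (⟨(X : Polynomial k) ^ (q + g), hXmem _ hqgH⟩ : R) ∈ A :=
    (hmemA _).mpr ⟨X ^ g, by rw [← pow_add]⟩
  -- trailing degree of nonzero elements of R lies in H
  have htd : ∀ x : R, (x : Polynomial k) ≠ 0 → (x : Polynomial k).natTrailingDegree ∈ H := by
    intro x hx
    exact hsupp x _ (Polynomial.natTrailingDegree_mem_support_of_nonzero hx)
  -- Part 1: not principal
  have hnotp : ¬ A.IsPrincipal := by
    rintro ⟨f, hf⟩
    have hfA : f ∈ A := hf ▸ Ideal.mem_span_singleton_self f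
    have hfq : (X : Polynomial k) ^ q ∣ (f : Polynomial k) := (hmemA f).mp hfA
    obtain ⟨r, hr⟩ : ∃ r : R, r * f = ⟨(X : Polynomial k) ^ q, hXmem q hqH⟩ := by
      have := hf ▸ hXq
      exact Ideal.mem_span_singleton'.mp this
    obtain ⟨s, hs⟩ : ∃ s : R, s * f = ⟨(X : Polynomial k) ^ (q + g), hXmem _ hqgH⟩ := by
      have := hf ▸ hXqg
      exact Ideal.mem_span_singleton'.mp this
    -- pass to polynomials
    have hr' : (r : Polynomial k) * (f : Polynomial k) = X ^ q := congrArg Subtype.val hr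
    have hs' : (s : Polynomial k) * (f : Polynomial k) = X ^ (q + g) := congrArg Subtype.val hs
    have hf0 : (f : Polynomial k) ≠ 0 := by
      intro h0
      rw [h0, mul_zero] at hr'
      exact pow_ne_zero q Polynomial.X_ne_zero hr'.symm
    have hr0 : (r : Polynomial k) ≠ 0 := fun h0 => by
      rw [h0, zero_mul] at hr'
      exact pow_ne_zero q Polynomial.X_ne_zero hr'.symm
    have hs0 : (s : Polynomial k) ≠ 0 := fun h0 => by
      rw [h0, zero_mul] at hs'
      exact pow_ne_zero (q + g) Polynomial.X_ne_zero hs'.symm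
    -- trailing degrees
    have htr : (r : Polynomial k).natTrailingDegree + (f : Polynomial k).natTrailingDegree = q := by
      rw [← Polynomial.natTrailingDegree_mul hr0 hf0, hr', Polynomial.natTrailingDegree_X_pow]
    have hts : (s : Polynomial k).natTrailingDegree + (f : Polynomial k).natTrailingDegree
        = q + g := by
      rw [← Polynomial.natTrailingDegree_mul hs0 hf0, hs', Polynomial.natTrailingDegree_X_pow]
    have hfge : q ≤ (f : Polynomial k).natTrailingDegree := by
      apply Polynomial.le_natTrailingDegree hf0
      intro m hm
      exact Polynomial.X_pow_dvd_iff.mp hfq m hm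
    have hfeq : (f : Polynomial k).natTrailingDegree = q := by omega
    have hsg : (s : Polynomial k).natTrailingDegree = g := by omega
    exact hgH (hsg ▸ htd s hs0)
  refine ⟨hnotp, ?_⟩
  -- Part 2: A is finitely generated
  -- generator gadget
  have elmem : ∀ n : ℕ, n ∈ H → q ≤ n → (X : Polynomial k) ^ n ∈ R := fun n hn _ => hXmem n hn
  classical
  set el : ℕ → R := fun n => if hn : (X : Polynomial k) ^ n ∈ R then ⟨X ^ n, hn⟩ else 0 with hel
  have helH : ∀ n, ∀ hn : n ∈ H, el n = ⟨(X : Polynomial k) ^ n, hXmem n hn⟩ := by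
    intro n hn
    simp only [hel, dif_pos (hXmem n hn)]
  set S : Finset R :=
    ((Finset.range (q + g + 1)).filter (fun n => n ∈ H ∧ q ≤ n)).image el with hS
  -- every relevant monomial lies in the span of S
  have hmono : ∀ n : ℕ, n ∈ H → q ≤ n → el n ∈ Ideal.span (S : Set R) := by
    intro n hn hqn
    by_cases hle : n < q + g + 1
    · apply Ideal.subset_span
      simp only [hS, Finset.coe_image, Set.mem_image, Finset.mem_coe, Finset.mem_filter,
        Finset.mem_range]
      exact ⟨n, ⟨hle, hn, hqn⟩, rfl⟩
    · -- n ≥ q + g + 1, so n - q > g hence n - q ∈ H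
      have hnq : n - q ∈ H := hgmax _ (by omega)
      have hqS : el q ∈ Ideal.span (S : Set R) := by
        apply Ideal.subset_span
        simp only [hS, Finset.coe_image, Set.mem_image, Finset.mem_coe, Finset.mem_filter,
          Finset.mem_range]
        exact ⟨q, ⟨by omega, hqH, le_rfl⟩, rfl⟩
      have : el n = ⟨(X : Polynomial k) ^ (n - q), hXmem _ hnq⟩ * el q := by
        rw [helH n hn, helH q hqH]
        apply Subtype.ext
        push_cast
        rw [← pow_add, Nat.sub_add_cancel hqn]
      rw [this]
      exact Ideal.mul_mem_left _ _ hqS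
  -- every element of A lies in the span of S, by induction on support size
  have hspan : ∀ x : R, x ∈ A → x ∈ Ideal.span (S : Set R) := by
    intro x hx
    obtain ⟨c, hc⟩ : ∃ c : ℕ, (x : Polynomial k).support.card = c := ⟨_, rfl⟩
    induction c using Nat.strong_induction_on generalizing x with
    | _ c ih =>
      by_cases hx0 : (x : Polynomial k) = 0
      · have : x = 0 := Subtype.ext hx0
        rw [this]; exact (Ideal.span (S : Set R)).zero_mem
      · set n := (x : Polynomial k).natTrailingDegree with hn
        have hnsupp : n ∈ (x : Polynomial k).support :=
          Polynomial.natTrailingDegree_mem_support_of_nonzero hx0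
        have hnH : n ∈ H := hsupp x n hnsupp
        have hnq : q ≤ n := by
          apply Polynomial.le_natTrailingDegree hx0
          intro m hm
          exact Polynomial.X_pow_dvd_iff.mp ((hmemA x).mp hx) m hm
        set cc : k := (x : Polynomial k).coeff n with hcc
        set y : R := x - (algebraMap k R cc) * el n with hy
        have hyval : (y : Polynomial k) = (x : Polynomial k) - C cc * X ^ n := by
          simp only [hy, helH n hnH]
          push_cast
          rfl
        have hysupp : (y : Polynomial k).support ⊆ (x : Polynomial k).support.erase n := by
          intro m hm
          have hmc : (y : Polynomial k).coeff m ≠ 0 := Polynomial.mem_support_iff.mp hm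
          rw [hyval, Polynomial.coeff_sub, Polynomial.coeff_C_mul,
            Polynomial.coeff_X_pow] at hmc
          by_cases hmn : m = n
          · subst hmn; simp [hcc] at hmc
          · rw [if_neg hmn, mul_zero, sub_zero] at hmc
            exact Finset.mem_erase.mpr ⟨hmn, Polynomial.mem_support_iff.mpr hmc⟩
        have hyA : y ∈ A := by
          rw [hmemA, hyval]
          refine dvd_sub ((hmemA x).mp hx) ?_
          exact Dvd.dvd.mul_left ⟨X ^ (n - q), by rw [← pow_add, Nat.add_sub_cancel' hnq]⟩ _
        have hycard : (y : Polynomial k).support.card < c := by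
          calc (y : Polynomial k).support.card
              ≤ ((x : Polynomial k).support.erase n).card := Finset.card_le_card hysupp
            _ < (x : Polynomial k).support.card :=
                Finset.card_erase_lt_of_mem hnsupp
            _ = c := hc
        have hyspan := ih _ hycard y hyA rfl
        have hxeq : x = y + (algebraMap k R cc) * el n := by rw [hy]; ring
        rw [hxeq]
        exact Ideal.add_mem _ hyspan (Ideal.mul_mem_left _ _ (hmono n hnH hnq))
  -- the span of S is contained in A
  have hspan' : Ideal.span (S : Set R) = A := by
    apply le_antisymm
    · rw [Ideal.span_le]
      intro z hz
      simp only [hS, Finset.coe_image, Set.mem_image, Finset.mem_coe, Finset.mem_filter,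
        Finset.mem_range] at hz
      obtain ⟨n, ⟨_, hnH, hqn⟩, rfl⟩ := hz
      rw [SetLike.mem_coe, hmemA, helH n hnH]
      exact ⟨X ^ (n - q), by rw [← pow_add, Nat.add_sub_cancel' hqn]⟩
    · intro x hx
      exact hspan x hx
  -- conclude
  rw [muIdeal]
  have hne : {n | ∃ s : Finset R, s.card = n ∧ Ideal.span (s : Set R) = A}.Nonempty :=
    ⟨S.card, S, rfl, hspan'⟩
  apply le_csInf hne
  rintro b ⟨s, hcard, hsp⟩
  by_contra hb
  interval_cases b
  · have : s = ∅ := Finset.card_eq_zero.mp hcard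
    subst this
    simp only [Finset.coe_empty, Ideal.span_empty] at hsp
    exact hnotp ⟨0, by rw [← hsp]; exact (Ideal.span_singleton_eq_bot.mpr rfl).symm⟩
  · obtain ⟨a, ha⟩ := Finset.card_eq_one.mp hcard
    subst ha
    exact hnotp ⟨a, by rw [← hsp]; simp⟩
end
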